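/- arXiv:0906.3849 — 13 statements merged into one kernel-verified Lean document; each statement's English description precedes it below -/
import Mathlib

section
/- Let W be an m×n row-stochastic matrix, r a nonnegative 1×m row vector and f a nonnegative 1×n row vector with r_+ := Σ_i r_i < 1, such that the matrix W̃ := (1+f_+)·(I_m − 1_m r)·W/(1−r_+) − 1_m f is entrywise nonnegative, where f_+ := Σ_j f_j and 1_m is the m×1 all-ones vector. Set c_i := H(W̃_i) − ((1+f_+)/(1−r_+))·H(W_i), where W̃_i and W_i denote the i-th rows of W̃ and W. Then for every p in the probability simplex Ω, setting p̃ := (1−r_+)·p + r, one has I(p|W,0,0) = (I(p̃|W̃,f,c) + H(f))/(1+f_+) + log(1+f_+) + (Σ_i r_i H(W_i))/(1−r_+). -/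
/-!
Squeezing the rows of `W` towards their `r`-weighted mean and then subtracting `f` is undone
on output distributions: with `p̃ = (1 - r₊) p + r`, one has `p̃ W̃ + f = (1 + f₊) p W`.
Entropy scales under `q ↦ t q` as `H(t q) = t H(q) - t log t · q₊`, and the correction `c` is
chosen so that `c_i - H(W̃_i) = -(1 + f₊)/(1 - r₊) · H(W_i)`; the identity is then linear algebra.
-/

open Finset

/-- Entropy of a (not necessarily normalized) nonnegative vector, natural log,
with the convention `0 * log 0 = 0` (automatic since `Real.log 0 = 0`). -/
noncomputable def Hent {k : ℕ} (q : Fin k → ℝ) : ℝ := -∑ j, q j * Real.log (q j)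

/-- `I(p|V,f,c) = H(pV + f) + ∑ i p_i (c_i − H(V_i)) − H(f)`. -/
noncomputable def Ifun {m n : ℕ} (V : Matrix (Fin m) (Fin n) ℝ)
    (f : Fin n → ℝ) (c : Fin m → ℝ) (p : Fin m → ℝ) : ℝ :=
  Hent (fun j => (∑ i, p i * V i j) + f j)
    + ∑ i, p i * (c i - Hent (fun j => V i j)) - Hent f

@[simp]
lemma Hent_zero {k : ℕ} : Hent (0 : Fin k → ℝ) = 0 := by
  simp [Hent]

lemma Hent_const_mul {k : ℕ} {t : ℝ} (ht : t ≠ 0) (q : Fin k → ℝ) :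
    Hent (fun j => t * q j) = t * Hent q - t * Real.log t * ∑ j, q j := by
  have hterm (j : Fin k) : t * q j * Real.log (t * q j)
      = t * (q j * Real.log (q j)) + t * Real.log t * q j := by
    rcases eq_or_ne (q j) 0 with h0 | h0
    · simp [h0]
    · rw [Real.log_mul ht h0]; ring
  simp only [Hent, hterm, sum_add_distrib, ← mul_sum]
  ring

lemma sum_sum_mul_eq_one {m n : ℕ} {W : Matrix (Fin m) (Fin n) ℝ}
    (hW1 : ∀ i, ∑ j, W i j = 1) {p : Fin m → ℝ} (hp1 : ∑ i, p i = 1) :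
    ∑ j, ∑ i, p i * W i j = 1 := by
  rw [sum_comm]
  simp only [← mul_sum, hW1, mul_one, hp1]

lemma sum_squeeze_mul_add {m n : ℕ} (W Wt : Matrix (Fin m) (Fin n) ℝ) (r p : Fin m → ℝ)
    (f : Fin n → ℝ) (hr1 : ∑ i, r i ≠ 1) (hp1 : ∑ i, p i = 1)
    (hWt : ∀ i j, Wt i j =
      (1 + ∑ j', f j') / (1 - ∑ i', r i') * (W i j - ∑ k, r k * W k j) - f j) (j : Fin n) :
    ∑ i, ((1 - ∑ i', r i') * p i + r i) * Wt i j + f j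
      = (1 + ∑ j', f j') * ∑ i, p i * W i j := by
  set S := ∑ i', r i'
  have hS : 1 - S ≠ 0 := sub_ne_zero.mpr (Ne.symm hr1)
  have hweights : ∑ i, ((1 - S) * p i + r i) = 1 := by
    rw [sum_add_distrib, ← mul_sum, hp1]; ring
  have hmix : ∑ i, ((1 - S) * p i + r i) * W i j
      = (1 - S) * ∑ i, p i * W i j + ∑ k, r k * W k j := by
    simp only [add_mul, sum_add_distrib, mul_assoc, ← mul_sum]
  have hsum : ∑ i, ((1 - S) * p i + r i) * Wt i j
      = (1 + ∑ j', f j') / (1 - S)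
          * (∑ i, ((1 - S) * p i + r i) * W i j - ∑ k, r k * W k j) - f j := by
    simp only [hWt, mul_sub, sum_sub_distrib, ← sum_mul, hweights, one_mul, mul_left_comm _ (_ / _),
      ← mul_sum]
  rw [hsum, hmix]
  field_simp
  ring

theorem squeezing_identity_general {m n : ℕ} (W : Matrix (Fin m) (Fin n) ℝ)
    (hW1 : ∀ i, ∑ j, W i j = 1)
    (r : Fin m → ℝ) (hr1 : ∑ i, r i < 1)
    (f : Fin n → ℝ) (hf0 : ∀ j, 0 ≤ f j)
    (Wt : Matrix (Fin m) (Fin n) ℝ)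
    (hWt : ∀ i j, Wt i j =
      (1 + ∑ j', f j') / (1 - ∑ i', r i') * (W i j - ∑ k, r k * W k j) - f j)
    (c : Fin m → ℝ)
    (hc : ∀ i, c i = Hent (fun j => Wt i j)
      - (1 + ∑ j', f j') / (1 - ∑ i', r i') * Hent (fun j => W i j))
    (p : Fin m → ℝ) (hp1 : ∑ i, p i = 1) :
    Ifun W 0 0 p =
      (Ifun Wt f c (fun i => (1 - ∑ i', r i') * p i + r i) + Hent f) / (1 + ∑ j', f j')
        + Real.log (1 + ∑ j', f j')
        + (∑ i, r i * Hent (fun j => W i j)) / (1 - ∑ i', r i') := by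
  have hsqueeze := sum_squeeze_mul_add W Wt r p f hr1.ne hp1 hWt
  set S := ∑ i', r i'
  set F := ∑ j', f j'
  have hS : 1 - S ≠ 0 := by linarith
  have hF : 1 + F ≠ 0 := by linarith [sum_nonneg fun j (_ : j ∈ univ) => hf0 j]
  have houtput : Hent (fun j => ∑ i, ((1 - S) * p i + r i) * Wt i j + f j)
      = (1 + F) * Hent (fun j => ∑ i, p i * W i j) - (1 + F) * Real.log (1 + F) := by
    simp only [hsqueeze, Hent_const_mul hF, sum_sum_mul_eq_one hW1 hp1, mul_one]
  have hcorrection : ∑ i, ((1 - S) * p i + r i) * (c i - Hent (fun j => Wt i j))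
      = -((1 + F) / (1 - S)) * ∑ i, ((1 - S) * p i + r i) * Hent (fun j => W i j) := by
    rw [mul_sum]
    refine sum_congr rfl fun i _ => ?_
    rw [hc]
    ring
  unfold Ifun
  rw [houtput, hcorrection]
  simp only [Pi.zero_apply, add_zero, zero_sub, Hent_zero, sub_zero,
    mul_neg, sum_neg_distrib, add_mul, sum_add_distrib, mul_assoc, ← mul_sum]
  field_simp
  ring

/-- Proposition 1: the squeezing reparameterization identity
`I(p|W,0,0) = (I(p̃|W̃,f,c) + H(f))/(1+f₊) + log(1+f₊) + (∑ᵢ rᵢ H(Wᵢ))/(1−r₊)`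
where `p̃ = (1−r₊)p + r`. -/
theorem squeezing_identity {m n : ℕ} (W : Matrix (Fin m) (Fin n) ℝ)
    (hW0 : ∀ i j, 0 ≤ W i j) (hW1 : ∀ i, ∑ j, W i j = 1)
    (r : Fin m → ℝ) (hr0 : ∀ i, 0 ≤ r i) (hr1 : ∑ i, r i < 1)
    (f : Fin n → ℝ) (hf0 : ∀ j, 0 ≤ f j)
    (Wt : Matrix (Fin m) (Fin n) ℝ)
    (hWt : ∀ i j, Wt i j =
      (1 + ∑ j', f j') / (1 - ∑ i', r i') * (W i j - ∑ k, r k * W k j) - f j)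
    (hWtpos : ∀ i j, 0 ≤ Wt i j)
    (c : Fin m → ℝ)
    (hc : ∀ i, c i = Hent (fun j => Wt i j)
      - (1 + ∑ j', f j') / (1 - ∑ i', r i') * Hent (fun j => W i j))
    (p : Fin m → ℝ) (hp0 : ∀ i, 0 ≤ p i) (hp1 : ∑ i, p i = 1) :
    Ifun W 0 0 p =
      (Ifun Wt f c (fun i => (1 - ∑ i', r i') * p i + r i) + Hent f) / (1 + ∑ j', f j')
        + Real.log (1 + ∑ j', f j')
        + (∑ i, r i * Hent (fun j => W i j)) / (1 - ∑ i', r i') :=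
  squeezing_identity_general W hW1 r hr1 f hf0 Wt hWt c hc p hp1
end

section
/- Let W be an m×n row-stochastic matrix, r a nonnegative 1×m row vector and f a nonnegative 1×n row vector with r_+ := Σ_i r_i < 1 and f_+ := Σ_j f_j, and set W̃ := (1+f_+)·(I_m − 1_m r)·W/(1−r_+) − 1_m f, where 1_m is the m×1 all-ones vector. Then for every p in the probability simplex Ω, setting p̃ := (1−r_+)·p + r, one has the identity of 1×n vectors p̃·W̃ + f = (1+f_+)·(p·W). -/
/-! Since `p̃ = (1−r₊)p + r` again has entries summing to one, the rank-one terms `1ₘ r W` and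
`1ₘ f` of `W̃` contribute exactly `r·W` and `f` to `p̃·W̃`; the `r·W` cancels against the
`r`-part of `p̃·W`, leaving `(1+f₊)/(1−r₊) · (1−r₊)·(p·W) − f`. -/

open Finset

section WeightedSums

variable {ι K : Type*} [Fintype ι] [Field K]

theorem sum_mul_affine_of_sum_eq_one {q : ι → K} (hq : ∑ i, q i = 1) (α s β : K) (x : ι → K) :
    ∑ i, q i * (α * (x i - s) - β) = α * (∑ i, q i * x i - s) - β := by
  have hexpand : ∀ i, q i * (α * (x i - s) - β) = α * (q i * x i) - (α * s + β) * q i :=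
    fun i => by ring
  simp only [hexpand, sum_sub_distrib, ← mul_sum, hq]
  ring

theorem sum_mul_add_mul (a : K) (p r x : ι → K) :
    ∑ i, (a * p i + r i) * x i = a * ∑ i, p i * x i + ∑ i, r i * x i := by
  simp only [add_mul, sum_add_distrib, mul_sum, mul_assoc]

theorem sum_squeeze_eq_one {p : ι → K} (hp : ∑ i, p i = 1) (r : ι → K) :
    ∑ i, ((1 - ∑ k, r k) * p i + r i) = 1 := by
  simpa [hp] using sum_mul_add_mul (1 - ∑ k, r k) p r 1

end WeightedSums

theorem squeezed_row_identity_general {m n : ℕ} (W : Matrix (Fin m) (Fin n) ℝ)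
    (r : Fin m → ℝ) (hr1 : ∑ i, r i < 1)
    (f : Fin n → ℝ)
    (Wt : Matrix (Fin m) (Fin n) ℝ)
    (hWt : ∀ i j, Wt i j =
      (1 + ∑ j', f j') / (1 - ∑ i', r i') * (W i j - ∑ k, r k * W k j) - f j)
    (p : Fin m → ℝ) (hp1 : ∑ i, p i = 1) :
    ∀ j, (∑ i, ((1 - ∑ i', r i') * p i + r i) * Wt i j) + f j
      = (1 + ∑ j', f j') * ∑ i, p i * W i j := by
  intro j
  have ha : 1 - ∑ i, r i ≠ 0 := sub_ne_zero.mpr (ne_of_gt hr1)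
  simp only [hWt]
  rw [sum_mul_affine_of_sum_eq_one (sum_squeeze_eq_one hp1 r), sum_mul_add_mul,
    add_sub_cancel_right, sub_add_cancel, ← mul_assoc, div_mul_cancel₀ _ ha]

/-- The key identity `p̃·W̃ + f = (1+f₊)·(p·W)` (as 1×n vectors), where
`W̃ = (1+f₊)(I − 1ₘ r)W/(1−r₊) − 1ₘ f` and `p̃ = (1−r₊)p + r`. -/
theorem squeezed_row_identity {m n : ℕ} (W : Matrix (Fin m) (Fin n) ℝ)
    (hW0 : ∀ i j, 0 ≤ W i j) (hW1 : ∀ i, ∑ j, W i j = 1)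
    (r : Fin m → ℝ) (hr0 : ∀ i, 0 ≤ r i) (hr1 : ∑ i, r i < 1)
    (f : Fin n → ℝ) (hf0 : ∀ j, 0 ≤ f j)
    (Wt : Matrix (Fin m) (Fin n) ℝ)
    (hWt : ∀ i j, Wt i j =
      (1 + ∑ j', f j') / (1 - ∑ i', r i') * (W i j - ∑ k, r k * W k j) - f j)
    (p : Fin m → ℝ) (hp0 : ∀ i, 0 ≤ p i) (hp1 : ∑ i, p i = 1) :
    ∀ j, (∑ i, ((1 - ∑ i', r i') * p i + r i) * Wt i j) + f j
      = (1 + ∑ j', f j') * ∑ i, p i * W i j :=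
  squeezed_row_identity_general W r hr1 f Wt hWt p hp1
end

section
/- Let V be an m×n row-stochastic matrix, f a nonnegative 1×n vector, c ∈ ℝ^m, and p ∈ Ω such that f_j + (pV)_j > 0 for every j. Let Φ = (Φ_{ji}), j = 1,…,n, i = 0,1,…,m, be any n×(m+1) matrix with strictly positive entries satisfying Σ_{i=0}^m Φ_{ji} = 1 for each j, and define I(p,Φ) := Σ_{i=1}^m Σ_{j=1}^n p_i V_{ij} log(Φ_{ji}/p_i) + Σ_{j=1}^n f_j log Φ_{j0} + Σ_{i=1}^m c_i p_i, with the convention that any term with coefficient p_i V_{ij} = 0 or f_j = 0 is 0. Then I(p,Φ) ≤ I(p|V,f,c). Moreover, for the choice Φ*_{ji} = p_i V_{ij}/(f_j + (pV)_j) for i ≥ 1 and Φ*_{j0} = f_j/(f_j + (pV)_j), one has I(p,Φ*) = I(p|V,f,c) (with the same zero conventions). -/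
open Finset

/-- `I(p,Φ) = ∑_{i,j} p_i V_{ij} log(Φ_{ji}/p_i) + ∑_j f_j log Φ_{j0} + ∑_i c_i p_i`;
terms with zero coefficient vanish automatically. -/
noncomputable def IPhi {m n : ℕ} (V : Matrix (Fin m) (Fin n) ℝ)
    (f : Fin n → ℝ) (c : Fin m → ℝ) (p : Fin m → ℝ)
    (Φ : Fin n → Fin m → ℝ) (Φ0 : Fin n → ℝ) : ℝ :=
  (∑ i, ∑ j, p i * V i j * Real.log (Φ j i / p i))
    + ∑ j, f j * Real.log (Φ0 j) + ∑ i, c i * p i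


/-!
For each output column `j`, the terms of `I(p,Φ)` that involve `Φ_{j·}` are, up to the
`Φ`-independent terms `-pᵢVᵢⱼ log pᵢ`, a weighted log-likelihood `∑ₖ wₖ log Φ_{jk}` with weights
`w = (f_j, p₁V₁ⱼ, …, pₘVₘⱼ)`. Gibbs' inequality (`log x ≤ x - 1`) shows that over the simplex it
is maximised at `Φ_{j·} = w / ∑ w`, which is `Φ*`. At `Φ*` the `log pᵢ` terms cancel and the rest
regroups into the entropies of `I(p|V,f,c)`.
-/

open Real

theorem mul_log_le_mul_log_div_add {a b s : ℝ} (ha : 0 ≤ a) (hb : 0 < b) (has : a ≤ s) :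
    a * log b ≤ a * log (a / s) + (s * b - a) := by
  rcases ha.eq_or_lt with rfl | ha
  · simpa using mul_nonneg (ha.trans has) hb.le
  have hs : 0 < s := ha.trans_le has
  have hlog : log (s * b / a) ≤ s * b / a - 1 := log_le_sub_one_of_pos (by positivity)
  calc a * log b = a * log (a / s) + a * log (s * b / a) := by
        rw [← mul_add, ← log_mul (by positivity) (by positivity)]
        congr 2
        field_simp
    _ ≤ a * log (a / s) + a * (s * b / a - 1) := by gcongr
    _ = a * log (a / s) + (s * b - a) := by field_simp

/-- Gibbs' inequality. -/
theorem sum_mul_log_le_sum_mul_log_div_sum {ι : Type*} [Fintype ι] {a b : ι → ℝ}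
    (ha : ∀ i, 0 ≤ a i) (hb : ∀ i, 0 < b i) (hb1 : ∑ i, b i = 1) :
    ∑ i, a i * log (b i) ≤ ∑ i, a i * log (a i / ∑ k, a k) := by
  have hterm : ∀ i ∈ univ, a i * log (b i)
      ≤ a i * log (a i / ∑ k, a k) + ((∑ k, a k) * b i - a i) := fun i _ =>
    mul_log_le_mul_log_div_add (ha i) (hb i)
      (single_le_sum (fun k _ => ha k) (mem_univ i))
  have hslack : ∑ i, ((∑ k, a k) * b i - a i) = 0 := by
    rw [sum_sub_distrib, ← mul_sum, hb1, mul_one, sub_self]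
  simpa [sum_add_distrib, hslack] using sum_le_sum hterm

theorem mul_log_div_eq_sub {a x t : ℝ} (hx : a ≠ 0 → x ≠ 0) (ht : a ≠ 0 → t ≠ 0) :
    a * log (x / t) = a * log x - a * log t := by
  by_cases ha : a = 0
  · simp [ha]
  · rw [log_div (hx ha) (ht ha), mul_sub]

theorem mul_mul_log_mul_div_div_self {p v q : ℝ} (hq : q ≠ 0) :
    p * v * log (p * v / q / p) = p * (v * log v) - p * v * log q := by
  by_cases hp : p = 0
  · simp [hp]
  have hcancel : p * v / q / p = v / q := by field_simp
  rw [hcancel, mul_log_div_eq_sub right_ne_zero_of_mul fun _ => hq]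
  ring

theorem column_log_likelihood_le_posterior {ι : Type*} [Fintype ι] {p v φ : ι → ℝ} {g φ₀ : ℝ}
    (hp : ∀ i, 0 ≤ p i) (hv : ∀ i, 0 ≤ v i) (hg : 0 ≤ g) (hφ : ∀ i, 0 < φ i) (hφ₀ : 0 < φ₀)
    (hφ1 : φ₀ + ∑ i, φ i = 1) :
    ∑ i, p i * v i * log (φ i / p i) + g * log φ₀
      ≤ ∑ i, p i * v i * log (p i * v i / (g + ∑ l, p l * v l) / p i)
        + g * log (g / (g + ∑ l, p l * v l)) := by
  -- Gibbs' inequality on `Option ι`, where `none` carries the weight `g` and the probability `φ₀`.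
  have gibbs := sum_mul_log_le_sum_mul_log_div_sum
    (a := fun k : Option ι => k.elim g fun i => p i * v i) (b := fun k => k.elim φ₀ φ)
    (fun k => k.rec hg fun i => mul_nonneg (hp i) (hv i)) (fun k => k.rec hφ₀ hφ)
    (by simpa [Fintype.sum_option] using hφ1)
  simp only [Fintype.sum_option, Option.elim] at gibbs
  have hsplit : ∀ x : ι → ℝ, (∀ i, p i * v i ≠ 0 → x i ≠ 0) →
      ∑ i, p i * v i * log (x i / p i)
        = ∑ i, p i * v i * log (x i) - ∑ i, p i * v i * log (p i) := fun x hx => by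
    rw [← sum_sub_distrib]
    exact sum_congr rfl fun i _ => mul_log_div_eq_sub (hx i) left_ne_zero_of_mul
  rw [hsplit φ fun i _ => (hφ i).ne', hsplit _ fun i h => div_ne_zero h ?_]
  · linarith
  · have hpv : 0 < p i * v i := (mul_nonneg (hp i) (hv i)).lt_of_ne' h
    exact (hpv.trans_le (le_add_of_nonneg_of_le hg
      (single_le_sum (fun l _ => mul_nonneg (hp l) (hv l)) (mem_univ i)))).ne'

theorem IPhi_eq_sum_columns {m n : ℕ} (V : Matrix (Fin m) (Fin n) ℝ) (f : Fin n → ℝ)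
    (c p : Fin m → ℝ) (Φ : Fin n → Fin m → ℝ) (Φ0 : Fin n → ℝ) :
    IPhi V f c p Φ Φ0
      = ∑ j, (∑ i, p i * V i j * log (Φ j i / p i) + f j * log (Φ0 j)) + ∑ i, c i * p i := by
  rw [IPhi, sum_comm, sum_add_distrib]

theorem IPhi_le_IPhi_posterior {m n : ℕ} {V : Matrix (Fin m) (Fin n) ℝ} {f : Fin n → ℝ}
    {p : Fin m → ℝ} (c : Fin m → ℝ) (hV0 : ∀ i j, 0 ≤ V i j) (hf0 : ∀ j, 0 ≤ f j)
    (hp0 : ∀ i, 0 ≤ p i) {Φ : Fin n → Fin m → ℝ} {Φ0 : Fin n → ℝ} (hΦ : ∀ j i, 0 < Φ j i)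
    (hΦ0 : ∀ j, 0 < Φ0 j) (hΦ1 : ∀ j, Φ0 j + ∑ i, Φ j i = 1) :
    IPhi V f c p Φ Φ0 ≤ IPhi V f c p
      (fun j i => p i * V i j / (f j + ∑ l, p l * V l j))
      (fun j => f j / (f j + ∑ l, p l * V l j)) := by
  rw [IPhi_eq_sum_columns, IPhi_eq_sum_columns]
  refine add_le_add_left (sum_le_sum fun j _ => ?_) _
  exact column_log_likelihood_le_posterior (v := fun i => V i j) hp0 (hV0 · j) (hf0 j) (hΦ j)
    (hΦ0 j) (hΦ1 j)

theorem IPhi_posterior_eq_Ifun {m n : ℕ} (V : Matrix (Fin m) (Fin n) ℝ) (f : Fin n → ℝ)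
    (c p : Fin m → ℝ) (hden : ∀ j, f j + ∑ i, p i * V i j ≠ 0) :
    IPhi V f c p
      (fun j i => p i * V i j / (f j + ∑ l, p l * V l j))
      (fun j => f j / (f j + ∑ l, p l * V l j)) = Ifun V f c p := by
  unfold IPhi Ifun Hent
  simp only [mul_mul_log_mul_div_div_self (hden _),
    mul_log_div_eq_sub id fun _ => hden _, sum_sub_distrib]
  simp only [add_comm (∑ i, p i * V i _) (f _), add_mul, sum_add_distrib, sum_mul, mul_sub,
    mul_neg, mul_sum, sum_sub_distrib, sum_neg_distrib, mul_comm (c _)]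
  rw [sum_comm (s := (univ : Finset (Fin n)))]
  ring

theorem IPhi_le_Ifun_and_eq_general {m n : ℕ} (V : Matrix (Fin m) (Fin n) ℝ)
    (hV0 : ∀ i j, 0 ≤ V i j)
    (f : Fin n → ℝ) (hf0 : ∀ j, 0 ≤ f j) (c : Fin m → ℝ)
    (p : Fin m → ℝ) (hp0 : ∀ i, 0 ≤ p i)
    (hden : ∀ j, 0 < f j + ∑ i, p i * V i j) :
    (∀ (Φ : Fin n → Fin m → ℝ) (Φ0 : Fin n → ℝ),
      (∀ j i, 0 < Φ j i) → (∀ j, 0 < Φ0 j) → (∀ j, Φ0 j + ∑ i, Φ j i = 1) →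
      IPhi V f c p Φ Φ0 ≤ Ifun V f c p)
    ∧ IPhi V f c p
        (fun j i => p i * V i j / (f j + ∑ l, p l * V l j))
        (fun j => f j / (f j + ∑ l, p l * V l j))
      = Ifun V f c p := by
  have hopt := IPhi_posterior_eq_Ifun V f c p fun j => (hden j).ne'
  exact ⟨fun _ _ hΦ hΦ0 hΦ1 => hopt ▸ IPhi_le_IPhi_posterior c hV0 hf0 hp0 hΦ hΦ0 hΦ1, hopt⟩

/-- For fixed `p`, `I(p,Φ) ≤ I(p|V,f,c)` for every stochastic `Φ` with positive
entries, with equality at `Φ*_{ji} = p_i V_{ij}/(f_j + (pV)_j)`,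
`Φ*_{j0} = f_j/(f_j + (pV)_j)`. -/
theorem IPhi_le_Ifun_and_eq {m n : ℕ} (V : Matrix (Fin m) (Fin n) ℝ)
    (hV0 : ∀ i j, 0 ≤ V i j) (hV1 : ∀ i, ∑ j, V i j = 1)
    (f : Fin n → ℝ) (hf0 : ∀ j, 0 ≤ f j) (c : Fin m → ℝ)
    (p : Fin m → ℝ) (hp0 : ∀ i, 0 ≤ p i) (hp1 : ∑ i, p i = 1)
    (hden : ∀ j, 0 < f j + ∑ i, p i * V i j) :
    (∀ (Φ : Fin n → Fin m → ℝ) (Φ0 : Fin n → ℝ),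
      (∀ j i, 0 < Φ j i) → (∀ j, 0 < Φ0 j) → (∀ j, Φ0 j + ∑ i, Φ j i = 1) →
      IPhi V f c p Φ Φ0 ≤ Ifun V f c p)
    ∧ IPhi V f c p
        (fun j i => p i * V i j / (f j + ∑ l, p l * V l j))
        (fun j => f j / (f j + ∑ l, p l * V l j))
      = Ifun V f c p :=
  IPhi_le_Ifun_and_eq_general V hV0 f hf0 c p hp0 hden
end

section
/- Let V be an m×n row-stochastic matrix, f a nonnegative 1×n vector, c ∈ ℝ^m, and r a nonnegative 1×m vector with r_+ := Σ_i r_i < 1. Let Φ = (Φ_{ji}), j = 1,…,n, i = 0,1,…,m, be an n×(m+1) matrix with strictly positive entries satisfying Σ_{i=0}^m Φ_{ji} = 1 for each j, and define I(p,Φ) := Σ_{i=1}^m Σ_{j=1}^n p_i V_{ij} log(Φ_{ji}/p_i) + Σ_{j=1}^n f_j log Φ_{j0} + Σ_{i=1}^m c_i p_i for p ∈ Ω(r), with the convention 0·log 0 = 0. Suppose α > 0 and p* ∈ Ω(r) satisfy p*_i = max{r_i, α·exp(c_i + Σ_j V_{ij} log Φ_{ji})} for every i = 1,…,m. Then I(p*,Φ)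 ≥ I(p,Φ) for every p ∈ Ω(r). -/
/-!
Since the rows of `V` sum to one, `I(p, Φ) = ∑ᵢ pᵢ (gᵢ - log pᵢ) + const` with
`gᵢ = cᵢ + ∑ⱼ Vᵢⱼ log Φⱼᵢ`, a concave function of `p`. Its tangent inequality at `p*`
(that is, `y (log x - log y) ≤ x - y`) bounds `I(p, Φ) - I(p*, Φ)` by
`∑ᵢ (pᵢ - p*ᵢ)(gᵢ - log p*ᵢ - 1)`. As `∑ᵢ (pᵢ - p*ᵢ) = 0`, the constant `log α + 1` may be
added to each bracket, leaving `∑ᵢ (pᵢ - p*ᵢ)(log (α e^{gᵢ}) - log p*ᵢ)`: a term vanishes where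
`p*ᵢ = α e^{gᵢ}`, and where `p*ᵢ = rᵢ > α e^{gᵢ}` it is `≤ 0` because `pᵢ ≥ rᵢ`.
-/

open Finset

open Real

lemma mul_log_sub_log_le {x y : ℝ} (hx : 0 < x) (hy : 0 ≤ y) :
    y * (log x - log y) ≤ x - y := by
  rcases hy.eq_or_lt with rfl | hy
  · simpa using hx.le
  · calc y * (log x - log y) = y * log (x / y) := by rw [log_div hx.ne' hy.ne']
      _ ≤ y * (x / y - 1) := mul_le_mul_of_nonneg_left (log_le_sub_one_of_pos (by positivity)) hy.le
      _ = x - y := by field_simp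

lemma sub_max_mul_log_sub_log_max_nonpos {r q b : ℝ} (hrq : r ≤ q) (hb : 0 < b) :
    (q - max r b) * (log b - log (max r b)) ≤ 0 := by
  rcases le_total r b with h | h
  · simp [max_eq_right h]
  · rw [max_eq_left h]
    exact mul_nonpos_of_nonneg_of_nonpos (sub_nonneg.2 hrq) (sub_nonpos.2 (log_le_log hb h))

theorem sum_mul_sub_log_le_of_eq_max {ι : Type*} [Fintype ι] (g r p q : ι → ℝ) {α : ℝ}
    (hα : 0 < α) (hq : ∀ i, q i = max (r i) (α * exp (g i)))
    (hp0 : ∀ i, 0 ≤ p i) (hpr : ∀ i, r i ≤ p i) (hsum : ∑ i, p i = ∑ i, q i) :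
    ∑ i, p i * (g i - log (p i)) ≤ ∑ i, q i * (g i - log (q i)) := by
  have hq_pos : ∀ i, 0 < q i := fun i =>
    (hq i).symm ▸ lt_max_of_lt_right (by positivity)
  have hterm : ∀ i, p i * (g i - log (p i)) ≤ q i * (g i - log (q i))
      + (p i - q i) * (log (α * exp (g i)) - log (q i)) - (1 + log α) * (p i - q i) := by
    intro i
    have h := mul_log_sub_log_le (hq_pos i) (hp0 i)
    rw [log_mul hα.ne' (exp_pos _).ne', log_exp]
    linear_combination h
  have hgap : ∀ i, (p i - q i) * (log (α * exp (g i)) - log (q i)) ≤ 0 := fun i =>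
    (hq i).symm ▸ sub_max_mul_log_sub_log_max_nonpos (hpr i) (by positivity)
  calc ∑ i, p i * (g i - log (p i))
      ≤ ∑ i, (q i * (g i - log (q i)) + (p i - q i) * (log (α * exp (g i)) - log (q i))
          - (1 + log α) * (p i - q i)) := sum_le_sum fun i _ => hterm i
    _ = ∑ i, q i * (g i - log (q i)) + ∑ i, (p i - q i) * (log (α * exp (g i)) - log (q i))
          - (1 + log α) * (∑ i, p i - ∑ i, q i) := by
        rw [sum_sub_distrib, sum_add_distrib, ← mul_sum, sum_sub_distrib]
    _ ≤ ∑ i, q i * (g i - log (q i)) := by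
        rw [hsum, sub_self, mul_zero, sub_zero]
        linarith [sum_nonpos fun i (_ : i ∈ univ) => hgap i]

lemma sum_mul_mul_log_div {κ : Type*} [Fintype κ] {w a : κ → ℝ} (hw : ∑ j, w j = 1)
    (ha : ∀ j, a j ≠ 0) (t : ℝ) :
    ∑ j, t * w j * log (a j / t) = t * (∑ j, w j * log (a j) - log t) := by
  rcases eq_or_ne t 0 with rfl | ht
  · simp
  · simp_rw [log_div (ha _) ht, mul_sub, sum_sub_distrib, mul_assoc, ← mul_sum, ← sum_mul, hw,
      one_mul]

lemma IPhi_eq {m n : ℕ} (V : Matrix (Fin m) (Fin n) ℝ) (hV1 : ∀ i, ∑ j, V i j = 1)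
    (f : Fin n → ℝ) (c p : Fin m → ℝ) {Φ : Fin n → Fin m → ℝ} (hΦ : ∀ j i, Φ j i ≠ 0)
    (Φ0 : Fin n → ℝ) :
    IPhi V f c p Φ Φ0 = ∑ i, p i * ((c i + ∑ j, V i j * log (Φ j i)) - log (p i))
      + ∑ j, f j * log (Φ0 j) := by
  simp only [IPhi, sum_mul_mul_log_div (hV1 _) (fun j => hΦ j _)]
  rw [add_right_comm, ← sum_add_distrib]
  congr 1
  exact sum_congr rfl fun i _ => by ring

theorem waterfilling_maximizes_general {m n : ℕ} (V : Matrix (Fin m) (Fin n) ℝ)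
    (hV1 : ∀ i, ∑ j, V i j = 1)
    (f : Fin n → ℝ) (c : Fin m → ℝ)
    (r : Fin m → ℝ)
    (Φ : Fin n → Fin m → ℝ) (Φ0 : Fin n → ℝ)
    (hΦpos : ∀ j i, 0 < Φ j i)
    (α : ℝ) (hα : 0 < α)
    (pstar : Fin m → ℝ)
    (hps1 : ∑ i, pstar i = 1)
    (hpsmax : ∀ i, pstar i =
      max (r i) (α * Real.exp (c i + ∑ j, V i j * Real.log (Φ j i)))) :
    ∀ p : Fin m → ℝ, (∀ i, 0 ≤ p i) → (∀ i, r i ≤ p i) → (∑ i, p i = 1) →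
      IPhi V f c p Φ Φ0 ≤ IPhi V f c pstar Φ Φ0 := by
  intro p hp0 hpr hp1
  have hΦ : ∀ j i, Φ j i ≠ 0 := fun j i => (hΦpos j i).ne'
  rw [IPhi_eq V hV1 f c p hΦ, IPhi_eq V hV1 f c pstar hΦ]
  gcongr ?_ + _
  exact sum_mul_sub_log_le_of_eq_max _ r p pstar hα hpsmax hp0 hpr (hp1.trans hps1.symm)

/-- For fixed `Φ`, the vector `p*` with `p*_i = max{r_i, α·exp(c_i + ∑_j V_{ij} log Φ_{ji})}`
maximizes `I(p,Φ)` over the restricted simplex `Ω(r)`. -/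
theorem waterfilling_maximizes {m n : ℕ} (V : Matrix (Fin m) (Fin n) ℝ)
    (hV0 : ∀ i j, 0 ≤ V i j) (hV1 : ∀ i, ∑ j, V i j = 1)
    (f : Fin n → ℝ) (hf0 : ∀ j, 0 ≤ f j) (c : Fin m → ℝ)
    (r : Fin m → ℝ) (hr0 : ∀ i, 0 ≤ r i) (hr1 : ∑ i, r i < 1)
    (Φ : Fin n → Fin m → ℝ) (Φ0 : Fin n → ℝ)
    (hΦpos : ∀ j i, 0 < Φ j i) (hΦ0pos : ∀ j, 0 < Φ0 j)
    (hΦsum : ∀ j, Φ0 j + ∑ i, Φ j i = 1)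
    (α : ℝ) (hα : 0 < α)
    (pstar : Fin m → ℝ)
    (hps0 : ∀ i, 0 ≤ pstar i) (hpsr : ∀ i, r i ≤ pstar i) (hps1 : ∑ i, pstar i = 1)
    (hpsmax : ∀ i, pstar i =
      max (r i) (α * Real.exp (c i + ∑ j, V i j * Real.log (Φ j i)))) :
    ∀ p : Fin m → ℝ, (∀ i, 0 ≤ p i) → (∀ i, r i ≤ p i) → (∑ i, p i = 1) →
      IPhi V f c p Φ Φ0 ≤ IPhi V f c pstar Φ Φ0 :=
  waterfilling_maximizes_general V hV1 f c r Φ Φ0 hΦpos α hα pstar hps1 hpsmax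
end

section
/- Let V be an m×n row-stochastic matrix, f a nonnegative 1×n vector, c ∈ ℝ^m, and r a nonnegative 1×m vector with r_+ := Σ_i r_i < 1. Let p ∈ Ω(r) have all entries positive and satisfy f_j + (pV)_j > 0 for every j. Define Φ_{ji} := p_i V_{ij}/(f_j + (pV)_j) for i = 1,…,m and Φ_{j0} := f_j/(f_j + (pV)_j), and suppose α > 0 and p' ∈ Ω(r) satisfy p'_i = max{r_i, α·exp(c_i + Σ_j V_{ij} log Φ_{ji})} for all i (with the convention that terms with V_{ij} = 0 are omitted from the exponent). Then I(p'|V,f,c) ≥ I(p|V,f,c); that is, one iteration of the squeezed Arimoto–Blahut update does not decrease the objective. -/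
/-!
The squeezed Arimoto–Blahut step is one round of alternating maximization. For the current `p`,
with `w = pV + f` and `g = abaExponent V f c p`, every `q` satisfies
`I(q) = Σ q (g - log q) + D(f ‖ w) - D(qV + f ‖ w) + D(q ‖ p)`.
At `q = p` the last two divergences vanish. The update `p'` maximizes the concave part
`Σ q (g - log q)` over `Ω(r)` (it is its KKT point, the multiplier `α` taking care of
`Σ q = 1`), and `D(p'V + f ‖ w) ≤ D(p' ‖ p)` is the data-processing inequality for the channel
`V` with the common extra mass `f`, a column-wise instance of the log-sum inequality.
-/

open Finset

open Real Matrix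

lemma Real.sub_le_mul_log_div {x y : ℝ} (hx : 0 ≤ x) (hy : 0 < y) :
    x - y ≤ x * log (x / y) := by
  have h := mul_le_mul_of_nonneg_left (self_sub_one_le_mul_log (div_nonneg hx hy.le)) hy.le
  rwa [mul_sub, mul_one, mul_div_cancel₀ _ hy.ne', ← mul_assoc, mul_div_cancel₀ _ hy.ne'] at h

lemma Real.mul_log_div {x y : ℝ} (hy : y ≠ 0) : x * log (x / y) = x * log x - x * log y := by
  rcases eq_or_ne x 0 with rfl | hx
  · simp
  · rw [log_div hx hy, mul_sub]

section

variable {ι κ : Type*} [Fintype ι] [Fintype κ]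

/-- Unnormalized Kullback–Leibler divergence. Since `x / 0 = 0` and `log 0 = 0`, it is the
intended quantity only when `b k = 0 → a k = 0`. -/
noncomputable def relEntropy (a b : ι → ℝ) : ℝ := ∑ k, a k * log (a k / b k)

@[simp] lemma relEntropy_self (a : ι → ℝ) : relEntropy a a = 0 := by
  refine sum_eq_zero fun k _ => ?_
  rcases eq_or_ne (a k) 0 with h | h <;> simp [h]

lemma relEntropy_eq_sub {a b : ι → ℝ} (hb : ∀ k, b k ≠ 0) :
    relEntropy a b = ∑ k, a k * log (a k) - ∑ k, a k * log (b k) := by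
  rw [relEntropy, ← sum_sub_distrib]
  exact sum_congr rfl fun k _ => mul_log_div (hb k)

theorem sum_mul_log_div_sum_le_relEntropy {a b : ι → ℝ} (ha : ∀ k, 0 ≤ a k)
    (hb : ∀ k, 0 ≤ b k) (hab : ∀ k, b k = 0 → a k = 0) :
    (∑ k, a k) * log ((∑ k, a k) / ∑ k, b k) ≤ relEntropy a b := by
  set A := ∑ k, a k
  set B := ∑ k, b k
  rcases (sum_nonneg fun k _ => hb k : 0 ≤ B).eq_or_lt with hB | hB
  · have hb0 : ∀ k, b k = 0 := fun k =>
      (sum_eq_zero_iff_of_nonneg fun k _ => hb k).1 hB.symm k (mem_univ k)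
    simp [relEntropy, A, hab _ (hb0 _)]
  have hA : 0 ≤ A := sum_nonneg fun k _ => ha k
  have hterm : ∀ k, a k - b k * (A / B) ≤ a k * log (a k / b k) - a k * log (A / B) := by
    intro k
    rcases (ha k).eq_or_lt with hak | hak
    · rw [← hak, zero_mul, zero_mul, sub_zero, zero_sub, neg_nonpos]
      exact mul_nonneg (hb k) (div_nonneg hA hB.le)
    have hbk : 0 < b k := (hb k).lt_of_ne fun h => hak.ne' (hab k h.symm)
    have hAk : 0 < A := hak.trans_le (single_le_sum (fun k _ => ha k) (mem_univ k))
    calc a k - b k * (A / B) ≤ a k * log (a k / (b k * (A / B))) :=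
          sub_le_mul_log_div hak.le (mul_pos hbk (div_pos hAk hB))
      _ = a k * log (a k / b k) - a k * log (A / B) := by
          rw [← div_div, log_div (div_pos hak hbk).ne' (div_pos hAk hB).ne', mul_sub]
  have := sum_le_sum fun k (_ : k ∈ univ) => hterm k
  rw [sum_sub_distrib, sum_sub_distrib, ← sum_mul, ← sum_mul, mul_div_cancel₀ _ hB.ne',
    sub_self] at this
  unfold relEntropy
  linarith

theorem relEntropy_vecMul_add_le {V : Matrix ι κ ℝ} (hV0 : ∀ i j, 0 ≤ V i j)
    (hV1 : ∀ i, ∑ j, V i j = 1) {e : κ → ℝ} (he : ∀ j, 0 ≤ e j) {a b : ι → ℝ}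
    (ha : ∀ i, 0 ≤ a i) (hb : ∀ i, 0 ≤ b i) (hab : ∀ i, b i = 0 → a i = 0) :
    relEntropy (a ᵥ* V + e) (b ᵥ* V + e) ≤ relEntropy a b := by
  have hterm : ∀ i j, a i * V i j * log (a i * V i j / (b i * V i j))
      = V i j * (a i * log (a i / b i)) := by
    intro i j
    rcases eq_or_ne (V i j) 0 with h | h
    · simp [h]
    · rw [mul_div_mul_right _ _ h]; ring
  have hcol : ∀ j, (a ᵥ* V + e) j * log ((a ᵥ* V + e) j / (b ᵥ* V + e) j)
      ≤ ∑ i, V i j * (a i * log (a i / b i)) := by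
    intro j
    -- log-sum inequality for the column `j`, with `e j` as an extra entry common to both sides
    have h := sum_mul_log_div_sum_le_relEntropy (ι := Option ι)
      (a := fun o => o.elim (e j) fun i => a i * V i j)
      (b := fun o => o.elim (e j) fun i => b i * V i j)
      (fun o => o.rec (he j) fun i => mul_nonneg (ha i) (hV0 i j))
      (fun o => o.rec (he j) fun i => mul_nonneg (hb i) (hV0 i j))
      (fun o => o.rec id fun i h => by
        simpa using (mul_eq_zero.1 h).imp_left (hab i))
    simpa [relEntropy, Fintype.sum_option, hterm, vecMul, dotProduct, add_comm] using h
  calc relEntropy (a ᵥ* V + e) (b ᵥ* V + e)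
      ≤ ∑ j, ∑ i, V i j * (a i * log (a i / b i)) := sum_le_sum fun j _ => hcol j
    _ = relEntropy a b := by
      rw [sum_comm]
      exact sum_congr rfl fun i _ => by rw [← sum_mul, hV1, one_mul]

noncomputable def gibbsObjective (g q : ι → ℝ) : ℝ := ∑ i, q i * (g i - log (q i))

lemma sub_max_mul_sub_log_max_nonpos {q r g α : ℝ} (hα : 0 < α) (hqr : r ≤ q) :
    (q - max r (α * exp g)) * (g + log α - log (max r (α * exp g))) ≤ 0 := by
  have hlog : log (α * exp g) = log α + g := by rw [log_mul hα.ne' (exp_ne_zero g), log_exp]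
  rcases le_total r (α * exp g) with h | h
  · rw [max_eq_right h, hlog]; exact (mul_eq_zero_of_right _ (by ring)).le
  · rw [max_eq_left h]
    refine mul_nonpos_of_nonneg_of_nonpos (sub_nonneg.2 hqr) ?_
    linarith [log_le_log (by positivity) h]

theorem gibbsObjective_le_max {g r q : ι → ℝ} {α : ℝ} (hα : 0 < α) (hq0 : ∀ i, 0 ≤ q i)
    (hqr : ∀ i, r i ≤ q i) (hsum : ∑ i, q i = ∑ i, max (r i) (α * exp (g i))) :
    gibbsObjective g q ≤ gibbsObjective g fun i => max (r i) (α * exp (g i)) := by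
  set q' : ι → ℝ := fun i => max (r i) (α * exp (g i))
  have hterm : ∀ i, q i * (g i - log (q i))
      ≤ q' i * (g i - log (q' i)) + (q i - q' i) * (-log α - 1) := by
    intro i
    have hq' : 0 < q' i := (by positivity : 0 < α * exp (g i)).trans_le (le_max_right _ _)
    have key := sub_le_mul_log_div (hq0 i) hq'
    rw [mul_log_div hq'.ne'] at key
    nlinarith [sub_max_mul_sub_log_max_nonpos (g := g i) hα (hqr i)]
  calc gibbsObjective g q ≤ ∑ i, (q' i * (g i - log (q' i)) + (q i - q' i) * (-log α - 1)) :=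
        sum_le_sum fun i _ => hterm i
    _ = gibbsObjective g q' := by
      rw [sum_add_distrib, ← sum_mul, sum_sub_distrib, hsum, sub_self, zero_mul, add_zero]
      rfl

noncomputable def abaExponent (V : Matrix ι κ ℝ) (f : κ → ℝ) (c p : ι → ℝ) (i : ι) : ℝ :=
  c i + ∑ j, V i j * log (p i * V i j / (f j + ∑ l, p l * V l j))

lemma abaExponent_eq {V : Matrix ι κ ℝ} (hV1 : ∀ i, ∑ j, V i j = 1) {f : κ → ℝ} {c p : ι → ℝ}
    (hp : ∀ i, p i ≠ 0) (hw : ∀ j, (p ᵥ* V + f) j ≠ 0) (i : ι) :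
    abaExponent V f c p i = c i + log (p i) + ∑ j, V i j * log (V i j)
      - ∑ j, V i j * log ((p ᵥ* V + f) j) := by
  have hterm : ∀ j, V i j * log (p i * V i j / (f j + ∑ l, p l * V l j))
      = V i j * log (p i) + V i j * log (V i j) - V i j * log ((p ᵥ* V + f) j) := by
    intro j
    rcases eq_or_ne (V i j) 0 with h | h
    · simp [h]
    · rw [show f j + ∑ l, p l * V l j = (p ᵥ* V + f) j from add_comm _ _,
        log_div (mul_ne_zero (hp i) h) (hw j), log_mul (hp i) h]
      ring
  rw [abaExponent, sum_congr rfl fun j _ => hterm j, sum_sub_distrib, sum_add_distrib, ← sum_mul,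
    hV1, one_mul]
  ring

end

theorem Ifun_eq {m n : ℕ} {V : Matrix (Fin m) (Fin n) ℝ} (hV1 : ∀ i, ∑ j, V i j = 1)
    {f : Fin n → ℝ} {c p : Fin m → ℝ} (hp : ∀ i, p i ≠ 0) (hw : ∀ j, (p ᵥ* V + f) j ≠ 0)
    (q : Fin m → ℝ) :
    Ifun V f c q = gibbsObjective (abaExponent V f c p) q + relEntropy f (p ᵥ* V + f)
      - relEntropy (q ᵥ* V + f) (p ᵥ* V + f) + relEntropy q p := by
  have hswap : ∑ i, q i * ∑ j, V i j * log (∑ l, p l * V l j + f j)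
      = ∑ j, (∑ i, q i * V i j) * log (∑ l, p l * V l j + f j) := by
    simp only [mul_sum, sum_mul, mul_assoc]
    exact sum_comm
  rw [relEntropy_eq_sub hw, relEntropy_eq_sub hw, relEntropy_eq_sub hp, gibbsObjective]
  simp only [abaExponent_eq hV1 hp hw, Ifun, Hent, vecMul, dotProduct, Pi.add_apply, add_mul,
    mul_sub, mul_add, mul_neg, sum_add_distrib, sum_sub_distrib, sum_neg_distrib, hswap]
  ring

theorem squeezedABA_step_monotone_general {m n : ℕ} (V : Matrix (Fin m) (Fin n) ℝ)
    (hV0 : ∀ i j, 0 ≤ V i j) (hV1 : ∀ i, ∑ j, V i j = 1)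
    (f : Fin n → ℝ) (hf0 : ∀ j, 0 ≤ f j) (c : Fin m → ℝ)
    (r : Fin m → ℝ)
    (p : Fin m → ℝ) (hppos : ∀ i, 0 < p i) (hpr : ∀ i, r i ≤ p i)
    (hp1 : ∑ i, p i = 1)
    (hden : ∀ j, 0 < f j + ∑ i, p i * V i j)
    (α : ℝ) (hα : 0 < α)
    (p' : Fin m → ℝ) (hp'0 : ∀ i, 0 ≤ p' i)
    (hp'1 : ∑ i, p' i = 1)
    (hp' : ∀ i, p' i = max (r i)
      (α * Real.exp (c i + ∑ j, V i j *
        Real.log (p i * V i j / (f j + ∑ l, p l * V l j))))) :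
    Ifun V f c p ≤ Ifun V f c p' := by
  set g := abaExponent V f c p
  set w := p ᵥ* V + f
  have hp0 : ∀ i, p i ≠ 0 := fun i => (hppos i).ne'
  have hw : ∀ j, w j ≠ 0 := fun j => (add_comm (f j) _ ▸ hden j).ne'
  have hp'eq : p' = fun i => max (r i) (α * exp (g i)) := funext hp'
  have hgibbs : gibbsObjective g p ≤ gibbsObjective g p' := by
    rw [hp'eq]
    exact gibbsObjective_le_max hα (fun i => (hppos i).le) hpr (by rw [hp1, ← hp'1, hp'eq])
  have hdata : relEntropy (p' ᵥ* V + f) w ≤ relEntropy p' p :=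
    relEntropy_vecMul_add_le hV0 hV1 hf0 hp'0 (fun i => (hppos i).le) fun i h => absurd h (hp0 i)
  calc Ifun V f c p = gibbsObjective g p + relEntropy f w := by
        rw [Ifun_eq hV1 hp0 hw p, relEntropy_self, relEntropy_self]; ring
    _ ≤ gibbsObjective g p' + relEntropy f w - relEntropy (p' ᵥ* V + f) w + relEntropy p' p := by
        linarith
    _ = Ifun V f c p' := (Ifun_eq hV1 hp0 hw p').symm

/-- One iteration of the squeezed Arimoto–Blahut update does not decrease
the objective `I(·|V,f,c)`. -/
theorem squeezedABA_step_monotone {m n : ℕ} (V : Matrix (Fin m) (Fin n) ℝ)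
    (hV0 : ∀ i j, 0 ≤ V i j) (hV1 : ∀ i, ∑ j, V i j = 1)
    (f : Fin n → ℝ) (hf0 : ∀ j, 0 ≤ f j) (c : Fin m → ℝ)
    (r : Fin m → ℝ) (hr0 : ∀ i, 0 ≤ r i) (hr1 : ∑ i, r i < 1)
    (p : Fin m → ℝ) (hppos : ∀ i, 0 < p i) (hpr : ∀ i, r i ≤ p i)
    (hp1 : ∑ i, p i = 1)
    (hden : ∀ j, 0 < f j + ∑ i, p i * V i j)
    (α : ℝ) (hα : 0 < α)
    (p' : Fin m → ℝ) (hp'0 : ∀ i, 0 ≤ p' i) (hp'r : ∀ i, r i ≤ p' i)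
    (hp'1 : ∑ i, p' i = 1)
    (hp' : ∀ i, p' i = max (r i)
      (α * Real.exp (c i + ∑ j, V i j *
        Real.log (p i * V i j / (f j + ∑ l, p l * V l j))))) :
    Ifun V f c p ≤ Ifun V f c p' :=
  squeezedABA_step_monotone_general V hV0 hV1 f hf0 c r p hppos hpr hp1 hden α hα p' hp'0 hp'1 hp'
end

section
/- (Rate of convergence.) Let W̃ be an m×n row-stochastic matrix, f a nonnegative 1×n vector, and c ∈ ℝ^m. On the open set of p ∈ ℝ^m with all p_i > 0 and f_j + Σ_l p_l W̃_{lj} > 0 for all j, define Φ_{ji}(p) := p_i W̃_{ij}/(f_j + Σ_l p_l W̃_{lj}) for i = 1,…,m, Φ_{j0}(p) := f_j/(f_j + Σ_l p_l W̃_{lj}), and the map M with components M_i(p) := exp(c_i + Σ_j W̃_{ij} log Φ_{ji}(p)) / Σ_{l=1}^m exp(c_l + Σ_j W̃_{lj} log Φ_{jl}(p)), where terms with W̃_{ij} = 0 are omitted from the exponents. Suppose p* lies in this open set, Σ_i p*_i = 1, and M(p*) = p*. Then M is differentiable at p* and its partial derivatives satisfy ∂M_i/∂p_k evaluated at p* =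 δ_{ik} − Σ_{j=1}^n W̃_{kj}·(Φ_{ji}(p*) + p*_i·Φ_{j0}(p*)); equivalently, the Jacobian matrix R(p*) with (k,i) entry ∂M_i/∂p_k(p*) equals I_m − W̃Ψ, where Ψ is the n×m matrix with entries Ψ_{ji} = Φ_{ji}(p*) + p*_i Φ_{j0}(p*). -/
/-!
`M` is the softmax of the exponents `g_i(p) = c_i + ∑_j W̃_{ij} log (p_i W̃_{ij} / A_j(p))`,
`A_j(p) = f_j + ∑_l p_l W̃_{lj}`, so `∂_k M_i = M_i (∂_k g_i - ∑_l M_l ∂_k g_l)`. Since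
`log (p_i W̃_{ij} / A_j) = log p_i + log W̃_{ij} - log A_j` and the rows of `W̃` sum to one,
`∂_k g_i = δ_{ik} / p_i - ∑_j W̃_{ij} W̃_{kj} / A_j`. At a fixed point `M_l = p_l`, and
`∑_l p_l W̃_{lj} = A_j - f_j` collapses `∑_l p_l ∂_k g_l` to `∑_j W̃_{kj} f_j / A_j`.
-/

open Finset Real

/-- The Arimoto–Blahut-type map `M`, with components
`M_i(p) = exp(c_i + ∑_j W̃_{ij} log Φ_{ji}(p)) / ∑_l exp(c_l + ∑_j W̃_{lj} log Φ_{jl}(p))`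
where `Φ_{ji}(p) = p_i W̃_{ij}/(f_j + ∑_l p_l W̃_{lj})`.  Terms with `W̃_{ij} = 0`
vanish automatically since `Real.log 0 = 0`. -/
noncomputable def ABmap {m n : ℕ} (Wt : Matrix (Fin m) (Fin n) ℝ)
    (f : Fin n → ℝ) (c : Fin m → ℝ) (p : Fin m → ℝ) : Fin m → ℝ := fun i =>
  Real.exp (c i + ∑ j, Wt i j *
      Real.log (p i * Wt i j / (f j + ∑ l, p l * Wt l j))) /
    ∑ l, Real.exp (c l + ∑ j, Wt l j *
      Real.log (p l * Wt l j / (f j + ∑ k, p k * Wt k j)))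

noncomputable def softmax {ι : Type*} [Fintype ι] (a : ι → ℝ) (i : ι) : ℝ :=
  exp (a i) / ∑ l, exp (a l)

section

variable {E : Type*} [NormedAddCommGroup E] [NormedSpace ℝ E] {x : E}

theorem hasFDerivAt_softmax_comp {ι : Type*} [Fintype ι] {g : E → ι → ℝ}
    {g' : ι → E →L[ℝ] ℝ} (hg : ∀ i, HasFDerivAt (fun p => g p i) (g' i) x) :
    HasFDerivAt (fun p => softmax (g p))
      (ContinuousLinearMap.pi fun i =>
        softmax (g x) i • (g' i - ∑ l, softmax (g x) l • g' l)) x := by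
  refine hasFDerivAt_pi.2 fun i => ?_
  set S := ∑ l, exp (g x l)
  have hS : 0 < S := sum_pos (fun l _ => exp_pos _) ⟨i, mem_univ _⟩
  have hsum : HasFDerivAt (fun p => ∑ l, exp (g p l)) (∑ l, exp (g x l) • g' l) x :=
    HasFDerivAt.fun_sum fun l _ => (hg l).exp
  have h : HasFDerivAt (fun p => exp (g p i) * (∑ l, exp (g p l))⁻¹) _ x :=
    (hg i).exp.mul ((hasDerivAt_inv hS.ne').comp_hasFDerivAt x hsum)
  refine h.congr_fderiv ?_
  have hσ : ∑ l, softmax (g x) l • g' l = S⁻¹ • ∑ l, exp (g x l) • g' l := by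
    simp only [softmax, div_eq_inv_mul, mul_smul, smul_sum, S]
  rw [hσ]
  simp only [softmax]
  module

theorem HasFDerivAt.const_mul_log_mul_div {u v : E → ℝ} {u' v' : E →L[ℝ] ℝ} (w : ℝ)
    (hu : HasFDerivAt u u' x) (hv : HasFDerivAt v v' x) (hux : u x ≠ 0) (hvx : v x ≠ 0) :
    HasFDerivAt (fun p => w * Real.log (u p * w / v p))
      (w • ((u x)⁻¹ • u' - (v x)⁻¹ • v')) x := by
  rcases eq_or_ne w 0 with rfl | hw
  · simpa using hasFDerivAt_const 0 x
  have hsplit : (fun p => Real.log (u p * w / v p)) =ᶠ[nhds x]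
      fun p => Real.log (u p) + Real.log w - Real.log (v p) := by
    filter_upwards [hu.continuousAt.eventually_ne hux, hv.continuousAt.eventually_ne hvx]
      with p hup hvp
    rw [log_div (mul_ne_zero hup hw) hvp, log_mul hup hw]
  have h := ((hu.log hux).add_const (Real.log w)).sub (hv.log hvx)
  exact (h.congr_of_eventuallyEq hsplit).const_mul w

end

section

variable {m n : ℕ} (Wt : Matrix (Fin m) (Fin n) ℝ) (f : Fin n → ℝ)

noncomputable def ABexponent (c p : Fin m → ℝ) (i : Fin m) : ℝ :=
  c i + ∑ j, Wt i j * log (p i * Wt i j / (f j + ∑ l, p l * Wt l j))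

noncomputable def ABexponentDeriv (p : Fin m → ℝ) (i : Fin m) : (Fin m → ℝ) →L[ℝ] ℝ :=
  ∑ j, Wt i j • ((p i)⁻¹ • ContinuousLinearMap.proj i -
    (f j + ∑ l, p l * Wt l j)⁻¹ • ∑ l, Wt l j • ContinuousLinearMap.proj l)

variable {Wt f} {p : Fin m → ℝ}

theorem hasFDerivAt_ABexponent (c : Fin m → ℝ) (hp : ∀ i, p i ≠ 0)
    (hA : ∀ j, f j + ∑ l, p l * Wt l j ≠ 0) (i : Fin m) :
    HasFDerivAt (fun q => ABexponent Wt f c q i) (ABexponentDeriv Wt f p i) p := by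
  have hden : ∀ j, HasFDerivAt (fun q : Fin m → ℝ => f j + ∑ l, q l * Wt l j)
      (∑ l, Wt l j • ContinuousLinearMap.proj l) p := fun j =>
    (HasFDerivAt.fun_sum fun l _ =>
      (hasFDerivAt_apply (𝕜 := ℝ) l p).mul_const (Wt l j)).const_add (f j)
  have hterm := fun j => HasFDerivAt.const_mul_log_mul_div
    (Wt i j) (hasFDerivAt_apply i p) (hden j) (hp i) (hA j)
  exact (HasFDerivAt.fun_sum fun j _ => hterm j).const_add (c i)

theorem hasFDerivAt_ABmap (c : Fin m → ℝ) (hp : ∀ i, p i ≠ 0)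
    (hA : ∀ j, f j + ∑ l, p l * Wt l j ≠ 0) :
    HasFDerivAt (ABmap Wt f c) (ContinuousLinearMap.pi fun i => ABmap Wt f c p i •
      (ABexponentDeriv Wt f p i - ∑ l, ABmap Wt f c p l • ABexponentDeriv Wt f p l)) p :=
  -- `ABmap Wt f c q` is `softmax (ABexponent Wt f c q)` by definition.
  hasFDerivAt_softmax_comp (hasFDerivAt_ABexponent c hp hA)

theorem ABexponentDeriv_single (i k : Fin m) :
    ABexponentDeriv Wt f p i (Pi.single k 1) =
      ∑ j, Wt i j * ((if i = k then (p i)⁻¹ else 0) - Wt k j / (f j + ∑ l, p l * Wt l j)) := by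
  simp [ABexponentDeriv, Pi.single_apply, div_eq_inv_mul]

theorem sum_mul_ABexponentDeriv_single (hp : ∀ i, p i ≠ 0)
    (hA : ∀ j, f j + ∑ l, p l * Wt l j ≠ 0) (k : Fin m) :
    ∑ l, p l * ABexponentDeriv Wt f p l (Pi.single k 1) =
      ∑ j, Wt k j * (f j / (f j + ∑ l, p l * Wt l j)) := by
  simp only [ABexponentDeriv_single, mul_sum]
  rw [sum_comm]
  refine sum_congr rfl fun j _ => ?_
  have hsplit : ∑ l, p l * (Wt l j * ((if l = k then (p l)⁻¹ else 0) -
      Wt k j / (f j + ∑ l, p l * Wt l j))) =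
      Wt k j - Wt k j * (∑ l, p l * Wt l j) / (f j + ∑ l, p l * Wt l j) := by
    simp only [mul_sub, sum_sub_distrib, mul_ite, mul_zero, sum_ite_eq', mem_univ, if_true,
      mul_sum, sum_div]
    congr 1
    · field_simp [hp k]
    · exact sum_congr rfl fun l _ => by ring
  rw [hsplit]
  field_simp [hA j]
  ring

theorem mul_sub_sum_mul_ABexponentDeriv_single (i k : Fin m) (hWt1 : ∑ j, Wt i j = 1)
    (hp : ∀ i, p i ≠ 0) (hA : ∀ j, f j + ∑ l, p l * Wt l j ≠ 0) :
    p i * (ABexponentDeriv Wt f p i (Pi.single k 1) -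
        ∑ l, p l * ABexponentDeriv Wt f p l (Pi.single k 1)) =
      (if i = k then 1 else 0) - ∑ j, Wt k j *
        (p i * Wt i j / (f j + ∑ l, p l * Wt l j) + p i * (f j / (f j + ∑ l, p l * Wt l j))) := by
  have hdiag : p i * ∑ j, Wt i j * (if i = k then (p i)⁻¹ else 0) = if i = k then 1 else 0 := by
    rw [← sum_mul, hWt1, one_mul]
    split_ifs <;> simp [hp i]
  rw [sum_mul_ABexponentDeriv_single hp hA, ABexponentDeriv_single]
  simp only [mul_sub, sum_sub_distrib, hdiag]
  rw [sub_sub, mul_sum, mul_sum, ← sum_add_distrib]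
  congr 1
  exact sum_congr rfl fun j _ => by ring

end

theorem ABmap_jacobian_general {m n : ℕ} (Wt : Matrix (Fin m) (Fin n) ℝ)
    (hWt1 : ∀ i, ∑ j, Wt i j = 1)
    (f : Fin n → ℝ) (c : Fin m → ℝ)
    (pstar : Fin m → ℝ) (hpos : ∀ i, 0 < pstar i)
    (hden : ∀ j, 0 < f j + ∑ l, pstar l * Wt l j)
    (hfix : ABmap Wt f c pstar = pstar) :
    DifferentiableAt ℝ (ABmap Wt f c) pstar ∧
    (∀ i k : Fin m,
      fderiv ℝ (ABmap Wt f c) pstar (Pi.single k 1) i =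
        (if i = k then (1 : ℝ) else 0) - ∑ j, Wt k j *
          (pstar i * Wt i j / (f j + ∑ l, pstar l * Wt l j)
            + pstar i * (f j / (f j + ∑ l, pstar l * Wt l j)))) ∧
    (Matrix.of fun k i : Fin m =>
        fderiv ℝ (ABmap Wt f c) pstar (Pi.single k 1) i)
      = 1 - Wt * Matrix.of (fun (j : Fin n) (i : Fin m) =>
          pstar i * Wt i j / (f j + ∑ l, pstar l * Wt l j)
            + pstar i * (f j / (f j + ∑ l, pstar l * Wt l j))) := by
  have hp : ∀ i, pstar i ≠ 0 := fun i => (hpos i).ne'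
  have hA : ∀ j, f j + ∑ l, pstar l * Wt l j ≠ 0 := fun j => (hden j).ne'
  have hM := hasFDerivAt_ABmap c hp hA
  rw [hfix] at hM
  have hpartial : ∀ i k : Fin m, fderiv ℝ (ABmap Wt f c) pstar (Pi.single k 1) i =
      (if i = k then (1 : ℝ) else 0) - ∑ j, Wt k j *
        (pstar i * Wt i j / (f j + ∑ l, pstar l * Wt l j)
          + pstar i * (f j / (f j + ∑ l, pstar l * Wt l j))) := by
    intro i k
    rw [hM.fderiv, ← mul_sub_sum_mul_ABexponentDeriv_single i k (hWt1 i) hp hA]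
    simp
  refine ⟨hM.differentiableAt, hpartial, ?_⟩
  ext k i
  simp [hpartial, Matrix.one_apply, Matrix.mul_apply, eq_comm]

/-- Theorem 2 (rate of convergence): at an interior fixed point `p*`, the map `M`
is differentiable and its Jacobian is `R(p*) = I_m − W̃Ψ`, i.e.
`∂M_i/∂p_k (p*) = δ_{ik} − ∑_j W̃_{kj}(Φ_{ji}(p*) + p*_i Φ_{j0}(p*))`. -/
theorem ABmap_jacobian {m n : ℕ} (Wt : Matrix (Fin m) (Fin n) ℝ)
    (hWt0 : ∀ i j, 0 ≤ Wt i j) (hWt1 : ∀ i, ∑ j, Wt i j = 1)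
    (f : Fin n → ℝ) (hf0 : ∀ j, 0 ≤ f j) (c : Fin m → ℝ)
    (pstar : Fin m → ℝ) (hpos : ∀ i, 0 < pstar i)
    (hden : ∀ j, 0 < f j + ∑ l, pstar l * Wt l j)
    (hsum : ∑ i, pstar i = 1)
    (hfix : ABmap Wt f c pstar = pstar) :
    DifferentiableAt ℝ (ABmap Wt f c) pstar ∧
    (∀ i k : Fin m,
      fderiv ℝ (ABmap Wt f c) pstar (Pi.single k 1) i =
        (if i = k then (1 : ℝ) else 0) - ∑ j, Wt k j *
          (pstar i * Wt i j / (f j + ∑ l, pstar l * Wt l j)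
            + pstar i * (f j / (f j + ∑ l, pstar l * Wt l j)))) ∧
    (Matrix.of fun k i : Fin m =>
        fderiv ℝ (ABmap Wt f c) pstar (Pi.single k 1) i)
      = 1 - Wt * Matrix.of (fun (j : Fin n) (i : Fin m) =>
          pstar i * Wt i j / (f j + ∑ l, pstar l * Wt l j)
            + pstar i * (f j / (f j + ∑ l, pstar l * Wt l j))) :=
  ABmap_jacobian_general Wt hWt1 f c pstar hpos hden hfix
end

section
/- Let W* be an m×n row-stochastic matrix and f a nonnegative 1×n vector with f_+ := Σ_j f_j, such that W̃ := (1+f_+)·W* − 1_m f is entrywise nonnegative, where 1_m is the m×1 all-ones vector. Let p* ∈ ℝ^m have nonnegative entries with Σ_i p*_i = 1, and suppose s := p*W* has all entries positive. Let D_s and D_{p*} be the diagonal matrices with diagonals s and p*, and Ψ := D_s^{-1}(W*)^T D_{p*}. Then W̃Ψ is a row-stochastic m×m matrix; in particular (I_m − W̃Ψ)·1_m = 0. -/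
/-!
Since every row of `W*` sums to `1`, the row sums of `(1 + f₊) W*` are `1 + f₊`, and subtracting the
constant row `f` removes exactly `f₊`; so `W̃` is row-stochastic. The matrix `Ψ` is the Bayes reversal
of the channel `W*` with input law `p*`: its entry `Ψ j k = p*_k W*_{kj} / s_j` is the posterior of `k`
given `j`, and these posteriors sum to `1` because `s = p* W*`. A product of row-stochastic matrices
is row-stochastic, and a row-stochastic matrix fixes the all-ones vector.
-/

open Finset Matrix

namespace Matrix

variable {ι κ ν R : Type*} [Fintype κ]

/-- Rectangular version of `Matrix.rowStochastic`, which only covers square matrices. -/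
structure IsRowStochastic [Semiring R] [PartialOrder R] (A : Matrix ι κ R) : Prop where
  nonneg : ∀ i j, 0 ≤ A i j
  sum_row : ∀ i, ∑ j, A i j = 1

namespace IsRowStochastic

variable [Semiring R] [PartialOrder R]

theorem mulVec_one {A : Matrix ι κ R} (hA : IsRowStochastic A) :
    A *ᵥ (fun _ => 1) = fun _ => 1 := by
  ext i
  simpa [mulVec, dotProduct] using hA.sum_row i

theorem mul [IsOrderedRing R] [Fintype ν] {A : Matrix ι κ R} {B : Matrix κ ν R}
    (hA : IsRowStochastic A) (hB : IsRowStochastic B) : IsRowStochastic (A * B) where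
  nonneg i k := sum_nonneg fun j _ => mul_nonneg (hA.nonneg i j) (hB.nonneg j k)
  sum_row i := by
    simp only [mul_apply]
    rw [sum_comm]
    simp only [← mul_sum, hB.sum_row, mul_one, hA.sum_row]

end IsRowStochastic

theorem sum_row_smul_sub_of_sum_row_eq_one [CommRing R] {W : Matrix ι κ R}
    (hW : ∀ i, ∑ j, W i j = 1) (f : κ → R) (i : ι) :
    ∑ j, ((1 + ∑ j, f j) • W - of fun (_ : ι) j => f j) i j = 1 := by
  simp only [sub_apply, smul_apply, of_apply, smul_eq_mul, sum_sub_distrib, ← mul_sum, hW]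
  ring

theorem isRowStochastic_diagonal_inv_mul_transpose_mul_diagonal [Fintype ι] [DecidableEq ι]
    [DecidableEq κ] [Field R] [LinearOrder R] [IsStrictOrderedRing R]
    {W : Matrix ι κ R} (hW : ∀ i j, 0 ≤ W i j) {p : ι → R} (hp : ∀ i, 0 ≤ p i) {s : κ → R}
    (hs : ∀ j, s j = ∑ i, p i * W i j) (hs0 : ∀ j, s j ≠ 0) :
    IsRowStochastic (diagonal (fun j => (s j)⁻¹) * Wᵀ * diagonal p) := by
  have hΨ : ∀ j k,
      (diagonal (fun j => (s j)⁻¹) * Wᵀ * diagonal p) j k = (s j)⁻¹ * (p k * W k j) :=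
    fun j k => by simp only [mul_diagonal, diagonal_mul, transpose_apply]; ring
  refine ⟨fun j k => ?_, fun j => ?_⟩
  · have hs_nonneg : 0 ≤ s j := hs j ▸ sum_nonneg fun i _ => mul_nonneg (hp i) (hW i j)
    rw [hΨ]
    exact mul_nonneg (inv_nonneg.2 hs_nonneg) (mul_nonneg (hp k) (hW k j))
  · simp only [hΨ, ← mul_sum, ← hs j, inv_mul_cancel₀ (hs0 j)]

end Matrix

theorem WtPsi_row_stochastic_general {m n : ℕ}
    (Wstar : Matrix (Fin m) (Fin n) ℝ)
    (hW0 : ∀ i j, 0 ≤ Wstar i j) (hW1 : ∀ i, ∑ j, Wstar i j = 1)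
    (f : Fin n → ℝ)
    (Wt : Matrix (Fin m) (Fin n) ℝ)
    (hWt : Wt = (1 + ∑ j, f j) • Wstar - Matrix.of fun (_ : Fin m) j => f j)
    (hWtpos : ∀ i j, 0 ≤ Wt i j)
    (pstar : Fin m → ℝ) (hp0 : ∀ i, 0 ≤ pstar i)
    (s : Fin n → ℝ) (hs : ∀ j, s j = ∑ i, pstar i * Wstar i j)
    (hspos : ∀ j, 0 < s j)
    (Ψ : Matrix (Fin n) (Fin m) ℝ)
    (hΨ : Ψ = Matrix.diagonal (fun j => (s j)⁻¹) * Wstarᵀ * Matrix.diagonal pstar) :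
    (∀ i k, 0 ≤ (Wt * Ψ) i k) ∧ (∀ i, ∑ k, (Wt * Ψ) i k = 1) ∧
      (1 - Wt * Ψ) *ᵥ (fun _ => (1 : ℝ)) = 0 := by
  have hWt_stoch : IsRowStochastic Wt :=
    ⟨hWtpos, hWt ▸ sum_row_smul_sub_of_sum_row_eq_one hW1 f⟩
  have hΨ_stoch : IsRowStochastic Ψ := hΨ ▸
    isRowStochastic_diagonal_inv_mul_transpose_mul_diagonal hW0 hp0 hs fun j => (hspos j).ne'
  have h := hWt_stoch.mul hΨ_stoch
  exact ⟨h.nonneg, h.sum_row, by rw [sub_mulVec, one_mulVec, h.mulVec_one, sub_self]⟩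

/-- With `Ψ = D_s⁻¹ (W*)ᵀ D_{p*}` and `W̃ = (1+f₊)W* − 1ₘ f ≥ 0`, the matrix `W̃Ψ`
is row-stochastic; in particular `(I_m − W̃Ψ)·1ₘ = 0`. -/
theorem WtPsi_row_stochastic {m n : ℕ}
    (Wstar : Matrix (Fin m) (Fin n) ℝ)
    (hW0 : ∀ i j, 0 ≤ Wstar i j) (hW1 : ∀ i, ∑ j, Wstar i j = 1)
    (f : Fin n → ℝ) (hf0 : ∀ j, 0 ≤ f j)
    (Wt : Matrix (Fin m) (Fin n) ℝ)
    (hWt : Wt = (1 + ∑ j, f j) • Wstar - Matrix.of fun (_ : Fin m) j => f j)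
    (hWtpos : ∀ i j, 0 ≤ Wt i j)
    (pstar : Fin m → ℝ) (hp0 : ∀ i, 0 ≤ pstar i) (hp1 : ∑ i, pstar i = 1)
    (s : Fin n → ℝ) (hs : ∀ j, s j = ∑ i, pstar i * Wstar i j)
    (hspos : ∀ j, 0 < s j)
    (Ψ : Matrix (Fin n) (Fin m) ℝ)
    (hΨ : Ψ = Matrix.diagonal (fun j => (s j)⁻¹) * Wstarᵀ * Matrix.diagonal pstar) :
    (∀ i k, 0 ≤ (Wt * Ψ) i k) ∧ (∀ i, ∑ k, (Wt * Ψ) i k = 1) ∧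
      (1 - Wt * Ψ) *ᵥ (fun _ => (1 : ℝ)) = 0 :=
  WtPsi_row_stochastic_general Wstar hW0 hW1 f Wt hWt hWtpos pstar hp0 s hs hspos Ψ hΨ
end

section
/- Let W* be an m×n row-stochastic matrix, let p* ∈ ℝ^m have all entries positive with Σ_i p*_i = 1, and suppose s := p*W* has all entries positive. Let D_s and D_{p*} be the diagonal matrices with diagonals s and p*. Then the m×m matrix I_m − W* D_s^{-1} (W*)^T D_{p*} is diagonalizable over ℝ: it is similar to a real symmetric matrix, and in particular all of its eigenvalues are real. -/
/-!
Conjugating by `D_{p*}^{1/2}` turns `I - W* D_s⁻¹ W*ᵀ D_{p*}` into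
`I - B D_s⁻¹ Bᵀ` with `B = D_{p*}^{1/2} W*`, which is visibly symmetric; a real symmetric
matrix is Hermitian over `ℂ`, so its spectrum, and that of every matrix similar to it, is real.
-/

open Finset Matrix

namespace Matrix

variable {ι κ : Type*}

theorem isSymm_mul_diagonal_mul_transpose [Fintype κ] [DecidableEq κ] {α : Type*}
    [CommSemiring α] (B : Matrix ι κ α) (d : κ → α) : (B * diagonal d * Bᵀ).IsSymm := by
  rw [IsSymm, transpose_mul, transpose_mul, transpose_transpose, diagonal_transpose,
    Matrix.mul_assoc]

theorem diagonal_mul_one_sub_mul_diagonal_inv [Fintype ι] [DecidableEq ι] [Fintype κ]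
    [DecidableEq κ] {K : Type*} [Field K] {q : ι → K} (hq : ∀ i, q i ≠ 0) (W : Matrix ι κ K)
    (d : κ → K) :
    diagonal q * (1 - W * diagonal d * Wᵀ * diagonal (q * q)) * (diagonal q)⁻¹ =
      1 - diagonal q * W * diagonal d * (diagonal q * W)ᵀ := by
  have hcancel : diagonal q * diagonal q⁻¹ = 1 := by
    rw [diagonal_mul_diagonal, ← diagonal_one]
    exact congrArg diagonal (funext fun i => mul_inv_cancel₀ (hq i))
  have hsq : diagonal (q * q) = diagonal q * diagonal q := (diagonal_mul_diagonal q q).symm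
  rw [inv_eq_right_inv hcancel, mul_sub, sub_mul, mul_one, hcancel, hsq, transpose_mul,
    diagonal_transpose]
  simp only [Matrix.mul_assoc, hcancel, Matrix.mul_one]

theorem spectrum_map_conj [Fintype ι] [DecidableEq ι] {R S : Type*} [CommRing R] [CommRing S]
    (f : R →+* S) {P : Matrix ι ι R} (hP : IsUnit P.det) (A : Matrix ι ι R) :
    spectrum S ((P * A * P⁻¹).map f) = spectrum S (A.map f) := by
  let u : (Matrix ι ι S)ˣ := Units.map f.mapMatrix.toMonoidHom (nonsingInvUnit P hP)
  have hu : (P * A * P⁻¹).map f = u * A.map f * (↑u⁻¹ : Matrix ι ι S) := by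
    simp only [Matrix.map_mul, u, Units.coe_map, Units.coe_map_inv, coe_units_inv]
    rfl
  rw [hu, spectrum.units_conjugate]

theorem IsSymm.im_eq_zero_of_mem_spectrum_map [Fintype ι] [DecidableEq ι]
    {S : Matrix ι ι ℝ} (hS : S.IsSymm) {z : ℂ}
    (hz : z ∈ spectrum ℂ (S.map fun x : ℝ => (x : ℂ))) : z.im = 0 := by
  have hH : (S.map fun x : ℝ => (x : ℂ)).IsHermitian :=
    (isHermitian_iff_isSymm.mpr hS).map _ fun x => (Complex.conj_ofReal x).symm
  obtain ⟨x, -, rfl⟩ := hH.spectrum_eq_image_range ▸ hz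
  exact Complex.ofReal_im x

end Matrix

theorem rate_matrix_diagonalizable_general {m n : ℕ}
    (Wstar : Matrix (Fin m) (Fin n) ℝ)
    (pstar : Fin m → ℝ) (hp : ∀ i, 0 < pstar i)
    (s : Fin n → ℝ)
    (A : Matrix (Fin m) (Fin m) ℝ)
    (hA : A = 1 - Wstar * Matrix.diagonal (fun j => (s j)⁻¹) * Wstarᵀ *
      Matrix.diagonal pstar) :
    (∃ P : Matrix (Fin m) (Fin m) ℝ, IsUnit P.det ∧ (P * A * P⁻¹).IsSymm) ∧
    (∀ d : ℂ, d ∈ spectrum ℂ (A.map (fun x : ℝ => (x : ℂ))) → d.im = 0) := by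
  set q : Fin m → ℝ := fun i => √(pstar i)
  have hq : ∀ i, q i ≠ 0 := fun i => (Real.sqrt_pos.mpr (hp i)).ne'
  have hqq : q * q = pstar := funext fun i => Real.mul_self_sqrt (hp i).le
  have hP : IsUnit (diagonal q).det := by
    rw [det_diagonal]
    exact (prod_ne_zero_iff.mpr fun i _ => hq i).isUnit
  have hsymm : (diagonal q * A * (diagonal q)⁻¹).IsSymm := by
    rw [hA, ← hqq, diagonal_mul_one_sub_mul_diagonal_inv hq]
    exact isSymm_one.sub (isSymm_mul_diagonal_mul_transpose _ _)
  refine ⟨⟨diagonal q, hP, hsymm⟩, fun d hd => hsymm.im_eq_zero_of_mem_spectrum_map ?_⟩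
  exact (spectrum_map_conj Complex.ofRealHom hP A).symm ▸ hd

/-- `I_m − W* D_s⁻¹ (W*)ᵀ D_{p*}` is similar (over ℝ) to a real symmetric matrix;
in particular all its (complex) eigenvalues are real. -/
theorem rate_matrix_diagonalizable {m n : ℕ}
    (Wstar : Matrix (Fin m) (Fin n) ℝ)
    (hW0 : ∀ i j, 0 ≤ Wstar i j) (hW1 : ∀ i, ∑ j, Wstar i j = 1)
    (pstar : Fin m → ℝ) (hp : ∀ i, 0 < pstar i) (hp1 : ∑ i, pstar i = 1)
    (s : Fin n → ℝ) (hs : ∀ j, s j = ∑ i, pstar i * Wstar i j)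
    (hspos : ∀ j, 0 < s j)
    (A : Matrix (Fin m) (Fin m) ℝ)
    (hA : A = 1 - Wstar * Matrix.diagonal (fun j => (s j)⁻¹) * Wstarᵀ *
      Matrix.diagonal pstar) :
    (∃ P : Matrix (Fin m) (Fin m) ℝ, IsUnit P.det ∧ (P * A * P⁻¹).IsSymm) ∧
    (∀ d : ℂ, d ∈ spectrum ℂ (A.map (fun x : ℝ => (x : ℂ))) → d.im = 0) :=
  rate_matrix_diagonalizable_general Wstar pstar hp s A hA
end

section
/- Let W* be an m×n row-stochastic matrix and f a nonnegative 1×n vector with f_+ := Σ_j f_j, such that W̃ := (1+f_+)·W* − 1_m f is entrywise nonnegative, where 1_m is the m×1 all-ones vector. Let p* ∈ ℝ^m have all entries positive with Σ_i p*_i = 1, and suppose s := p*W* has all entries positive. Let D_s and D_{p*} be the diagonal matrices with diagonals s and p*, and Ψ := D_s^{-1}(W*)^T D_{p*}. Then every complex eigenvalue d of the m×m matrix I_m − W̃Ψ is real and satisfies 0 ≤ d ≤ 1. -/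
open Finset Matrix

/-!
If `x` is a left eigenvector of `A = W̃Ψ` for the eigenvalue `λ = 1 - d`, then `A` being
row-stochastic gives `|λ| ≤ 1` (Gershgorin) and `λ (x ⬝ 1) = x ⬝ 1`. So either `λ = 1`, or
`x ⬝ 1 = 0`; in the latter case the rank-one part `1ₘ f` of `W̃` is invisible to `x`, and `x` is a
left eigenvector of `(1 + f₊) W* D_s⁻¹ (W*)ᵀ D_{p*}`, a positive semidefinite matrix times a
positive diagonal one. Pairing the eigen-equation with `D_{p*}⁻¹ x̄` gives
`λ ∑ₖ |xₖ|² / p*ₖ = (1 + f₊) ∑ⱼ |(x W*)ⱼ|² / sⱼ ≥ 0`.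
-/

open scoped ComplexOrder

theorem spectrum.one_sub_mem_iff {R A : Type*} [CommRing R] [Ring A] [Algebra R A] {a : A}
    {r : R} : 1 - r ∈ spectrum R a ↔ r ∈ spectrum R (1 - a) := by
  rw [spectrum.mem_iff, spectrum.mem_iff, ← IsUnit.neg_iff, map_sub, map_one, neg_sub]
  congr! 2
  abel

theorem Complex.le_one_of_nonneg_of_norm_le_one {z : ℂ} (h0 : 0 ≤ z) (h1 : ‖z‖ ≤ 1) : z ≤ 1 :=
  (Complex.eq_coe_norm_of_nonneg h0).trans_le (by exact_mod_cast h1)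

namespace Matrix

variable {m n : Type*} [Fintype m] [Fintype n] [DecidableEq n]

theorem exists_vecMul_eq_smul_of_mem_spectrum {K : Type*} [Field K] {A : Matrix n n K} {μ : K}
    (hμ : μ ∈ spectrum K A) : ∃ x ≠ 0, x ᵥ* A = μ • x := by
  rw [spectrum.mem_iff, isUnit_iff_isUnit_det, isUnit_iff_ne_zero, not_not,
    ← exists_vecMul_eq_zero_iff] at hμ
  obtain ⟨x, hx0, hx⟩ := hμ
  refine ⟨x, hx0, ?_⟩
  rwa [vecMul_sub, Algebra.algebraMap_eq_smul_one, vecMul_smul, vecMul_one, sub_eq_zero,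
    eq_comm] at hx

theorem mul_mem_rowStochastic {R : Type*} [Semiring R] [PartialOrder R] [IsOrderedRing R]
    {A : Matrix n m R} {B : Matrix m n R} (hA0 : ∀ i j, 0 ≤ A i j) (hA1 : A *ᵥ 1 = 1)
    (hB0 : ∀ i j, 0 ≤ B i j) (hB1 : B *ᵥ 1 = 1) : A * B ∈ rowStochastic R n :=
  ⟨fun i k => sum_nonneg fun j _ => mul_nonneg (hA0 i j) (hB0 j k), by
    rw [← mulVec_mulVec, hB1, hA1]⟩

theorem diagonal_mul_transpose_mul_diagonal_nonneg {R : Type*} [CommSemiring R]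
    [PartialOrder R] [IsOrderedRing R] [DecidableEq m] {W : Matrix m n R}
    (hW : ∀ i j, 0 ≤ W i j) {d : n → R} (hd : ∀ j, 0 ≤ d j) {p : m → R} (hp : ∀ i, 0 ≤ p i)
    (j : n) (k : m) : 0 ≤ (diagonal d * Wᵀ * diagonal p) j k := by
  rw [mul_diagonal, diagonal_mul, transpose_apply]
  exact mul_nonneg (mul_nonneg (hd j) (hW k j)) (hp k)

theorem diagonal_inv_mul_transpose_mul_diagonal_mulVec_one {K : Type*} [Field K]
    [DecidableEq m] (W : Matrix m n K) (p : m → K) (hW : ∀ j, (p ᵥ* W) j ≠ 0) :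
    (diagonal (p ᵥ* W)⁻¹ * Wᵀ * diagonal p) *ᵥ 1 = 1 := by
  have hp : diagonal p *ᵥ 1 = p := by ext i; simp [mulVec_diagonal]
  ext j
  rw [← mulVec_mulVec, ← mulVec_mulVec, hp, mulVec_transpose, mulVec_diagonal, Pi.inv_apply,
    inv_mul_cancel₀ (hW j), Pi.one_apply]

omit [Fintype m] [DecidableEq n] in
theorem one_add_sum_smul_sub_of_mulVec_one {R : Type*} [CommRing R] {W : Matrix m n R}
    (hW : W *ᵥ 1 = 1) (f : n → R) :
    ((1 + ∑ j, f j) • W - of fun (_ : m) j => f j) *ᵥ 1 = 1 := by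
  ext i
  have hi : ∑ j, W i j = 1 := by simpa [mulVec, dotProduct] using congrFun hW i
  simp [mulVec, dotProduct, ← mul_sum, hi]

theorem norm_le_one_of_mem_spectrum_of_mem_rowStochastic {M : Matrix n n ℝ}
    (hM : M ∈ rowStochastic ℝ n) {μ : ℂ} (hμ : μ ∈ spectrum ℂ (M.map ((↑) : ℝ → ℂ))) :
    ‖μ‖ ≤ 1 := by
  rw [← spectrum_toLin', ← Module.End.hasEigenvalue_iff_mem_spectrum] at hμ
  obtain ⟨k, hk⟩ := eigenvalue_mem_ball hμ
  have hnorm : ∀ j, ‖(M.map ((↑) : ℝ → ℂ)) k j‖ = M k j := fun j => by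
    rw [map_apply, Complex.norm_real, Real.norm_of_nonneg (nonneg_of_mem_rowStochastic hM)]
  rw [Metric.mem_closedBall, dist_eq_norm, sum_congr rfl fun j _ => hnorm j,
    sum_erase_eq_sub (mem_univ k), sum_row_of_mem_rowStochastic hM k] at hk
  calc ‖μ‖ ≤ ‖μ - M.map ((↑) : ℝ → ℂ) k k‖ + ‖M.map ((↑) : ℝ → ℂ) k k‖ :=
        norm_le_norm_sub_add _ _
    _ ≤ 1 := by rw [hnorm]; linarith

omit [DecidableEq n] in
theorem eq_one_or_dotProduct_one_eq_zero_of_vecMul_eq_smul {K : Type*} [Field K]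
    {A : Matrix n n K} (hA : A *ᵥ 1 = 1) {x : n → K} {μ : K} (hx : x ᵥ* A = μ • x) :
    μ = 1 ∨ x ⬝ᵥ 1 = 0 := by
  have h : μ * (x ⬝ᵥ 1) = x ⬝ᵥ 1 := by
    rw [← smul_eq_mul, ← smul_dotProduct, ← hx, ← dotProduct_mulVec, hA]
  rwa [← sub_eq_zero, ← sub_one_mul, mul_eq_zero, sub_eq_zero] at h

theorem PosSemidef.nonneg_of_vecMul_mul_diagonal_eq_smul {𝕜 : Type*} [RCLike 𝕜]
    {M : Matrix n n 𝕜} (hM : M.PosSemidef) {p : n → 𝕜} (hp : ∀ i, 0 < p i) {x : n → 𝕜}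
    (hx0 : x ≠ 0) {μ : 𝕜} (hx : x ᵥ* (M * diagonal p) = μ • x) : 0 ≤ μ := by
  set y : n → 𝕜 := fun i => star (x i) / p i
  have hq : 0 < x ⬝ᵥ y := by
    obtain ⟨i, hi⟩ := Function.ne_iff.mp hx0
    refine sum_pos' (fun j _ => ?_) ⟨i, mem_univ i, ?_⟩
    · rw [← mul_div_assoc]
      exact div_nonneg (mul_star_self_nonneg _) (hp j).le
    · rw [← mul_div_assoc]
      exact div_pos (mul_star_self_pos (.of_ne_zero hi)) (hp i)
  have hDy : diagonal p *ᵥ y = star x := by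
    ext i
    simp [y, mulVec_diagonal, mul_div_cancel₀ _ (hp i).ne']
  have h : μ * (x ⬝ᵥ y) = x ⬝ᵥ (M *ᵥ star x) := by
    rw [← smul_eq_mul, ← smul_dotProduct, ← hx, ← vecMul_vecMul, ← dotProduct_mulVec, hDy,
      dotProduct_mulVec]
  have hr : 0 ≤ x ⬝ᵥ (M *ᵥ star x) := by simpa using hM.dotProduct_mulVec_nonneg (star x)
  rw [← eq_div_iff hq.ne'] at h
  exact h ▸ div_nonneg hr hq.le

theorem nonneg_of_vecMul_smul_sub_vecMulVec_one_mul_eq_smul {𝕜 : Type*} [RCLike 𝕜]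
    [DecidableEq m] (W : Matrix m n 𝕜) {c : 𝕜} (hc : 0 ≤ c) (g : n → 𝕜) {s : n → 𝕜}
    (hs : ∀ j, 0 ≤ s j) {p : m → 𝕜} (hp : ∀ i, 0 < p i) {x : m → 𝕜} (hx0 : x ≠ 0)
    (hx1 : x ⬝ᵥ 1 = 0) {μ : 𝕜}
    (hx : x ᵥ* ((c • W - vecMulVec 1 g) * (diagonal s * Wᴴ * diagonal p)) = μ • x) :
    0 ≤ μ := by
  have hM : (c • (W * diagonal s * Wᴴ)).PosSemidef :=
    ((PosSemidef.diagonal hs).mul_mul_conjTranspose_same W).smul hc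
  refine hM.nonneg_of_vecMul_mul_diagonal_eq_smul hp hx0 ?_
  rw [← hx, Matrix.sub_mul, vecMul_sub, vecMulVec_mul, vecMul_vecMulVec, hx1, zero_smul,
    sub_zero]
  simp only [Matrix.smul_mul, Matrix.mul_assoc]

theorem nonneg_of_vecMul_map_ofReal_smul_sub_mul_eq_smul [DecidableEq m] (W : Matrix m n ℝ)
    {c : ℝ} (hc : 0 ≤ c) (g : n → ℝ) {s : n → ℝ} (hs : ∀ j, 0 ≤ s j) {p : m → ℝ}
    (hp : ∀ i, 0 < p i) {x : m → ℂ} (hx0 : x ≠ 0) (hx1 : x ⬝ᵥ 1 = 0) {μ : ℂ}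
    (hx : x ᵥ* ((c • W - of fun _ j => g j) * (diagonal s * Wᵀ * diagonal p)).map
      ((↑) : ℝ → ℂ) = μ • x) : 0 ≤ μ := by
  set V := W.map ((↑) : ℝ → ℂ)
  have hmap : ((c • W - of fun _ j => g j) * (diagonal s * Wᵀ * diagonal p)).map
      ((↑) : ℝ → ℂ) = ((c : ℂ) • V - vecMulVec 1 fun j => (g j : ℂ)) *
        (diagonal (fun j => (s j : ℂ)) * Vᴴ * diagonal fun i => (p i : ℂ)) := by
    refine (Matrix.map_mul (f := Complex.ofRealHom)).trans (congrArg₂ _ ?_ ?_)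
    · ext i j
      simp [V, vecMulVec]
    · ext j k
      simp [V, diagonal_mul, mul_diagonal]
  rw [hmap] at hx
  exact nonneg_of_vecMul_smul_sub_vecMulVec_one_mul_eq_smul V (Complex.zero_le_real.mpr hc) _
    (fun j => Complex.zero_le_real.mpr (hs j)) (fun i => Complex.zero_lt_real.mpr (hp i)) hx0
    hx1 hx

end Matrix

theorem rate_matrix_eigenvalues_in_unit_interval_general {m n : ℕ}
    (Wstar : Matrix (Fin m) (Fin n) ℝ)
    (hW0 : ∀ i j, 0 ≤ Wstar i j) (hW1 : ∀ i, ∑ j, Wstar i j = 1)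
    (f : Fin n → ℝ) (hf0 : ∀ j, 0 ≤ f j)
    (Wt : Matrix (Fin m) (Fin n) ℝ)
    (hWt : Wt = (1 + ∑ j, f j) • Wstar - Matrix.of fun (_ : Fin m) j => f j)
    (hWtpos : ∀ i j, 0 ≤ Wt i j)
    (pstar : Fin m → ℝ) (hp : ∀ i, 0 < pstar i)
    (s : Fin n → ℝ) (hs : ∀ j, s j = ∑ i, pstar i * Wstar i j)
    (hspos : ∀ j, 0 < s j)
    (Ψ : Matrix (Fin n) (Fin m) ℝ)
    (hΨ : Ψ = Matrix.diagonal (fun j => (s j)⁻¹) * Wstarᵀ * Matrix.diagonal pstar) :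
    ∀ d : ℂ, d ∈ spectrum ℂ ((1 - Wt * Ψ).map (fun x : ℝ => (x : ℂ))) →
      d.im = 0 ∧ 0 ≤ d.re ∧ d.re ≤ 1 := by
  intro d hd
  obtain rfl : s = pstar ᵥ* Wstar := funext hs
  have hΨ0 : ∀ j k, 0 ≤ Ψ j k := hΨ ▸ diagonal_mul_transpose_mul_diagonal_nonneg hW0
    (fun j => (inv_pos.mpr (hspos j)).le) (fun i => (hp i).le)
  have hΨ1 : Ψ *ᵥ 1 = 1 :=
    hΨ ▸ diagonal_inv_mul_transpose_mul_diagonal_mulVec_one _ _ fun j => (hspos j).ne'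
  have hWt1 : Wt *ᵥ 1 = 1 :=
    hWt ▸ one_add_sum_smul_sub_of_mulVec_one (funext fun i => by simp [mulVec, dotProduct, hW1]) f
  have hA : Wt * Ψ ∈ rowStochastic ℝ (Fin m) := mul_mem_rowStochastic hWtpos hWt1 hΨ0 hΨ1
  have hspec : 1 - d ∈ spectrum ℂ ((Wt * Ψ).map ((↑) : ℝ → ℂ)) := by
    rwa [spectrum.one_sub_mem_iff, ← Matrix.map_one _ Complex.ofReal_zero Complex.ofReal_one,
      ← Matrix.map_sub _ fun _ _ => Complex.ofReal_sub _ _]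
  obtain ⟨x, hx0, hx⟩ := exists_vecMul_eq_smul_of_mem_spectrum hspec
  have hA1 : (Wt * Ψ).map ((↑) : ℝ → ℂ) *ᵥ 1 = 1 := by
    ext i
    simp [mulVec, dotProduct, ← Complex.ofReal_sum, sum_row_of_mem_rowStochastic hA]
  have hnonneg : 0 ≤ 1 - d := by
    rcases eq_one_or_dotProduct_one_eq_zero_of_vecMul_eq_smul hA1 hx with h | hsum
    · simp [h]
    subst hWt hΨ
    exact nonneg_of_vecMul_map_ofReal_smul_sub_mul_eq_smul Wstar
      (add_nonneg zero_le_one (sum_nonneg fun j _ => hf0 j)) f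
      (fun j => (inv_pos.mpr (hspos j)).le) hp hx0 hsum hx
  have hle : 1 - d ≤ 1 := Complex.le_one_of_nonneg_of_norm_le_one hnonneg
    (norm_le_one_of_mem_spectrum_of_mem_rowStochastic hA hspec)
  obtain ⟨hre0, -⟩ := Complex.le_def.mp ((sub_le_self_iff 1).mp hle)
  obtain ⟨hre1, him⟩ := Complex.le_def.mp (sub_nonneg.mp hnonneg)
  exact ⟨him, hre0, hre1⟩

/-- Proposition 3: every complex eigenvalue `d` of `I_m − W̃Ψ`, where
`Ψ = D_s⁻¹ (W*)ᵀ D_{p*}` and `W̃ = (1+f₊)W* − 1ₘ f ≥ 0`, is real with `0 ≤ d ≤ 1`. -/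
theorem rate_matrix_eigenvalues_in_unit_interval {m n : ℕ}
    (Wstar : Matrix (Fin m) (Fin n) ℝ)
    (hW0 : ∀ i j, 0 ≤ Wstar i j) (hW1 : ∀ i, ∑ j, Wstar i j = 1)
    (f : Fin n → ℝ) (hf0 : ∀ j, 0 ≤ f j)
    (Wt : Matrix (Fin m) (Fin n) ℝ)
    (hWt : Wt = (1 + ∑ j, f j) • Wstar - Matrix.of fun (_ : Fin m) j => f j)
    (hWtpos : ∀ i j, 0 ≤ Wt i j)
    (pstar : Fin m → ℝ) (hp : ∀ i, 0 < pstar i) (hp1 : ∑ i, pstar i = 1)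
    (s : Fin n → ℝ) (hs : ∀ j, s j = ∑ i, pstar i * Wstar i j)
    (hspos : ∀ j, 0 < s j)
    (Ψ : Matrix (Fin n) (Fin m) ℝ)
    (hΨ : Ψ = Matrix.diagonal (fun j => (s j)⁻¹) * Wstarᵀ * Matrix.diagonal pstar) :
    ∀ d : ℂ, d ∈ spectrum ℂ ((1 - Wt * Ψ).map (fun x : ℝ => (x : ℂ))) →
      d.im = 0 ∧ 0 ≤ d.re ∧ d.re ≤ 1 :=
  rate_matrix_eigenvalues_in_unit_interval_general Wstar hW0 hW1 f hf0 Wt hWt hWtpos pstar hp s hs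
    hspos Ψ hΨ
end

section
/- Let W be an m×n row-stochastic matrix, and let r be a nonnegative 1×m row vector with r_+ := Σ_i r_i < 1 satisfying W_{ij} ≥ (rW)_j for all i, j (i.e., W ≥ 1_m·rW entrywise). Let p̂ ∈ ℝ^m have all entries positive with Σ_i p̂_i = 1, and suppose s := p̂W has all entries positive. Set U := (I_m − 1_m r)/(1−r_+), p* := (1−r_+)·p̂ + r, F := W D_s^{-1} W^T, and A := F U^T D_{p*}, where D_s and D_{p*} are the diagonal matrices with diagonals s and p*. Then every complex eigenvalue of A is real and lies in the interval [0,1]. -/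
open Finset Matrix Module.End

open scoped ComplexOrder

/-!
Put `V := U W`, so that `F Uᵀ = W D_s⁻¹ Vᵀ`. The hypothesis `W ≥ 1 r W` says that `V ≥ 0`, and
`p* U = p̂` gives `p* V = s`. Hence `A = W R` with `R := D_s⁻¹ Vᵀ D_{p*}` row-stochastic, so `A`
is row-stochastic and its eigenvalues lie in the unit disc. On the other hand
`W = (1 - r₊) V + 1 (r W)` gives `A = (1 - r₊) V R + 1 (r A)`, a rank-one perturbation along `1`,
which `V R` fixes. Every eigenvalue of `A` is therefore either `(1 - r₊) + r A 1 ≥ 0` or an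
eigenvalue of `(1 - r₊) V D_s⁻¹ Vᵀ · D_{p*}`, a positive semidefinite times a positive definite
matrix, whose eigenvalues are nonnegative.
-/

namespace Matrix

variable {ι κ : Type*} [Fintype ι]

theorem vecMul_replicateRow {α : Type*} [NonUnitalNonAssocSemiring α] (x r : ι → α) :
    x ᵥ* replicateRow ι r = (∑ i, x i) • r := by
  ext j
  simp [vecMul, dotProduct, replicateRow, sum_mul]

theorem posSemidef_map_ofReal_mul_diagonal_mul_transpose [Fintype κ] [DecidableEq κ]
    (B : Matrix ι κ ℝ) {w : κ → ℝ} (hw : 0 ≤ w) :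
    ((B * diagonal w * Bᵀ).map Complex.ofReal).PosSemidef := by
  have hmap : (B * diagonal w * Bᵀ).map Complex.ofReal
      = (B.map Complex.ofReal : Matrix ι κ ℂ) * diagonal (fun j => (w j : ℂ)) *
        (B.map Complex.ofReal)ᴴ := by
    ext i j
    simp [Matrix.mul_apply, diagonal_apply, apply_ite]
  rw [hmap]
  exact (PosSemidef.diagonal fun j => by simpa using hw j).mul_mul_conjTranspose_same _

variable [DecidableEq ι]

section Field

variable {K : Type*} [Field K]

theorem hasEigenvalue_toLin'_iff {M : Matrix ι ι K} {μ : K} :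
    HasEigenvalue (toLin' M) μ ↔ ∃ x ≠ 0, M *ᵥ x = μ • x := by
  refine ⟨fun h => ?_, fun ⟨x, hx0, hx⟩ => hasEigenvalue_of_hasEigenvector ⟨?_, hx0⟩⟩
  · obtain ⟨x, hx⟩ := h.exists_hasEigenvector
    exact ⟨x, hx.2, by simpa using hx.apply_eq_smul⟩
  · simpa [mem_eigenspace_iff] using hx

theorem hasEigenvalue_add_vecMulVec {M : Matrix ι ι K} {u v : ι → K} {a μ : K}
    (hu : M *ᵥ u = a • u) (hμ : HasEigenvalue (toLin' (M + vecMulVec u v)) μ) :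
    μ = a + v ⬝ᵥ u ∨ HasEigenvalue (toLin' M) μ := by
  obtain ⟨x, hx0, hx⟩ := hasEigenvalue_toLin'_iff.mp hμ
  rw [add_mulVec, vecMulVec_mulVec, op_smul_eq_smul] at hx
  by_cases hμa : μ = a
  · subst hμa
    by_cases hu0 : u = 0
    · exact .inr (hasEigenvalue_toLin'_iff.mpr ⟨x, hx0, by simpa [hu0] using hx⟩)
    · exact .inr (hasEigenvalue_toLin'_iff.mpr ⟨u, hu0, hu⟩)
  -- For `μ ≠ a`, shifting `x` along `u` removes the rank-one term: `M (x - γ u) = μ (x - γ u)`.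
  set γ := (v ⬝ᵥ x) / (μ - a)
  have hγ : (μ - a) * γ = v ⬝ᵥ x := mul_div_cancel₀ _ (sub_ne_zero.mpr hμa)
  by_cases hy0 : x - γ • u = 0
  · left
    rw [sub_eq_zero] at hy0
    have hγ0 : γ ≠ 0 := by rintro h; simp [h] at hy0; exact hx0 hy0
    have hu0 : u ≠ 0 := by rintro rfl; simp at hy0; exact hx0 hy0
    rw [hy0, mulVec_smul, hu, dotProduct_smul, smul_smul, smul_eq_mul, smul_smul, ← add_smul] at hx
    exact mul_left_cancel₀ hγ0 (by linear_combination -smul_left_injective K hu0 hx)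
  · refine .inr (hasEigenvalue_toLin'_iff.mpr ⟨_, hy0, ?_⟩)
    rw [mulVec_sub, mulVec_smul, hu, eq_sub_of_add_eq hx, smul_sub, smul_smul, smul_smul, ← hγ]
    module

/-- The inverse of `(1 - r₊) I + 1 r`, the matrix that mixes each row with `r`. -/
noncomputable def unmix (r : ι → K) : Matrix ι ι K :=
  (1 - ∑ i, r i)⁻¹ • (1 - replicateRow ι r)

variable {r : ι → K}

theorem unmix_mulVec_one (hr : ∑ i, r i ≠ 1) : unmix r *ᵥ 1 = 1 := by
  rw [unmix, smul_mulVec, sub_mulVec, one_mulVec, replicateRow_mulVec_eq_const]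
  ext i
  simp [dotProduct]
  field_simp [sub_ne_zero.mpr hr.symm]

theorem vecMul_unmix (hr : ∑ i, r i ≠ 1) {p : ι → K} (hp : ∑ i, p i = 1) :
    ((1 - ∑ i, r i) • p + r) ᵥ* unmix r = p := by
  have hsum : ∑ i, ((1 - ∑ i, r i) • p + r) i = 1 := by
    simp [sum_add_distrib, ← mul_sum, hp]
  rw [unmix, vecMul_smul, vecMul_sub, vecMul_one, vecMul_replicateRow, hsum, one_smul,
    add_sub_cancel_right, smul_smul, inv_mul_cancel₀ (sub_ne_zero.mpr hr.symm), one_smul]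

theorem smul_unmix_mul (hr : ∑ i, r i ≠ 1) (W : Matrix ι κ K) :
    (1 - ∑ i, r i) • (unmix r * W) = W - replicateRow ι (r ᵥ* W) := by
  rw [unmix, smul_mul, smul_smul, mul_inv_cancel₀ (sub_ne_zero.mpr hr.symm), one_smul,
    Matrix.sub_mul, Matrix.one_mul, replicateRow_vecMul]

variable [Fintype κ]

theorem mul_eq_smul_unmix_mul_add_replicateRow (hr : ∑ i, r i ≠ 1) {ι' : Type*}
    (W : Matrix ι κ K) (R : Matrix κ ι' K) :
    W * R = (1 - ∑ i, r i) • (unmix r * W * R) + replicateRow ι (r ᵥ* (W * R)) := by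
  rw [← vecMul_vecMul, replicateRow_vecMul, ← smul_mul, ← Matrix.add_mul, smul_unmix_mul hr,
    sub_add_cancel]

variable [DecidableEq κ]

/-- Bayes' rule: the posterior channel of `V` under the prior `p`. -/
noncomputable def reverseChannel (V : Matrix ι κ K) (p : ι → K) : Matrix κ ι K :=
  diagonal (p ᵥ* V)⁻¹ * Vᵀ * diagonal p

theorem reverseChannel_apply (V : Matrix ι κ K) (p : ι → K) (j : κ) (i : ι) :
    reverseChannel V p j i = ((p ᵥ* V) j)⁻¹ * (p i * V i j) := by
  simp [reverseChannel, diagonal_mul, mul_diagonal]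
  ring

theorem reverseChannel_mulVec_one {V : Matrix ι κ K} {p : ι → K} (hpV : ∀ j, (p ᵥ* V) j ≠ 0) :
    reverseChannel V p *ᵥ 1 = 1 := by
  ext j
  simp only [mulVec, dotProduct, reverseChannel_apply, Pi.one_apply, mul_one, ← mul_sum]
  exact inv_mul_cancel₀ (hpV j)

end Field

section Ordered

variable {K : Type*} [Field K] [LinearOrder K] [IsStrictOrderedRing K]

theorem unmix_mul_nonneg {r : ι → K} (hr : ∑ i, r i < 1) {W : Matrix ι κ K}
    (hrW : ∀ i j, (r ᵥ* W) j ≤ W i j) (i : ι) (j : κ) : 0 ≤ (unmix r * W) i j := by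
  have hij := congrFun₂ (smul_unmix_mul hr.ne W) i j
  simp only [Matrix.smul_apply, smul_eq_mul, Matrix.sub_apply, replicateRow_apply] at hij
  exact (mul_nonneg_iff_of_pos_left (sub_pos.mpr hr)).mp (hij ▸ sub_nonneg.mpr (hrW i j))

variable [Fintype κ] [DecidableEq κ]

theorem reverseChannel_nonneg {V : Matrix ι κ K} {p : ι → K} (hV : ∀ i j, 0 ≤ V i j)
    (hp : ∀ i, 0 ≤ p i) (j : κ) (i : ι) : 0 ≤ reverseChannel V p j i := by
  rw [reverseChannel_apply]
  have hpV : 0 ≤ (p ᵥ* V) j := sum_nonneg fun k _ => mul_nonneg (hp k) (hV k j)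
  exact mul_nonneg (inv_nonneg.mpr hpV) (mul_nonneg (hp i) (hV i j))

theorem mul_reverseChannel_mem_rowStochastic {W V : Matrix ι κ K} {p : ι → K}
    (hW : ∀ i j, 0 ≤ W i j) (hW1 : W *ᵥ 1 = 1) (hV : ∀ i j, 0 ≤ V i j) (hp : ∀ i, 0 ≤ p i)
    (hpV : ∀ j, (p ᵥ* V) j ≠ 0) : W * reverseChannel V p ∈ rowStochastic K ι :=
  ⟨fun i k => sum_nonneg fun j _ => mul_nonneg (hW i j) (reverseChannel_nonneg hV hp j k),
    by rw [← mulVec_mulVec, reverseChannel_mulVec_one hpV, hW1]⟩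

end Ordered

theorem norm_le_one_of_mem_rowStochastic {A : Matrix ι ι ℝ} (hA : A ∈ rowStochastic ℝ ι)
    {μ : ℂ} (hμ : HasEigenvalue (toLin' (A.map Complex.ofReal)) μ) : ‖μ‖ ≤ 1 := by
  obtain ⟨k, hk⟩ := eigenvalue_mem_ball hμ
  have hrad : ∑ j ∈ univ.erase k, ‖(A.map Complex.ofReal) k j‖ = 1 - A k k := by
    rw [← sum_row_of_mem_rowStochastic hA k, ← add_sum_erase _ _ (mem_univ k),
      add_sub_cancel_left]
    exact sum_congr rfl fun j _ => by
      simp [Real.norm_of_nonneg (nonneg_of_mem_rowStochastic hA)]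
  rw [mem_closedBall_iff_norm, hrad, map_apply] at hk
  calc ‖μ‖ ≤ ‖μ - A k k‖ + ‖(A k k : ℂ)‖ := norm_le_norm_sub_add _ _
    _ ≤ 1 := by
      rw [Complex.norm_real, Real.norm_of_nonneg (nonneg_of_mem_rowStochastic hA)]
      linarith

theorem PosSemidef.nonneg_of_hasEigenvalue_mul_posDef {𝕜 : Type*} [RCLike 𝕜]
    {G D : Matrix ι ι 𝕜} (hG : G.PosSemidef) (hD : D.PosDef) {μ : 𝕜}
    (hμ : HasEigenvalue (toLin' (G * D)) μ) : 0 ≤ μ := by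
  obtain ⟨y, hy0, hy⟩ := hasEigenvalue_toLin'_iff.mp hμ
  have hquad : star (D *ᵥ y) ⬝ᵥ (G *ᵥ (D *ᵥ y)) = μ * (star y ⬝ᵥ (D *ᵥ y)) := by
    rw [mulVec_mulVec, hy, dotProduct_smul, star_mulVec, ← dotProduct_mulVec,
      hD.isHermitian.eq, smul_eq_mul]
  have hnonneg := hG.dotProduct_mulVec_nonneg (D *ᵥ y)
  rw [hquad] at hnonneg
  exact le_of_mul_le_mul_right (by rwa [zero_mul]) (hD.dotProduct_mulVec_pos hy0)

theorem nonneg_of_hasEigenvalue_smul_mul_reverseChannel_add_replicateRow [Fintype κ]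
    [DecidableEq κ] {V : Matrix ι κ ℝ} {p : ι → ℝ} {c : ℝ} {v : ι → ℝ} (hV1 : V *ᵥ 1 = 1)
    (hp : ∀ i, 0 < p i) (hpV : ∀ j, 0 < (p ᵥ* V) j) (hc : 0 ≤ c) (hv : ∀ i, 0 ≤ v i) {μ : ℂ}
    (hμ : HasEigenvalue
      (toLin' ((c • (V * reverseChannel V p) + replicateRow ι v).map Complex.ofReal)) μ) :
    0 ≤ μ := by
  set M := c • (V * reverseChannel V p)
  have hmap : (M + replicateRow ι v).map Complex.ofReal
      = M.map Complex.ofReal + vecMulVec 1 (fun i => (v i : ℂ)) := by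
    ext i j
    simp
  have hM1 : M.map Complex.ofReal *ᵥ 1 = (c : ℂ) • 1 := by
    have hM1' : M *ᵥ 1 = c • 1 := by
      rw [smul_mulVec, ← mulVec_mulVec, reverseChannel_mulVec_one fun j => (hpV j).ne', hV1]
    ext i
    have hi := congrArg Complex.ofReal (congrFun hM1' i)
    simp only [mulVec, dotProduct, Pi.one_apply, mul_one, Pi.smul_apply, smul_eq_mul] at hi ⊢
    push_cast at hi
    simpa using hi
  rcases hasEigenvalue_add_vecMulVec hM1 (hmap ▸ hμ) with rfl | hμM
  · have hreal : (c : ℂ) + (fun i => (v i : ℂ)) ⬝ᵥ 1 = ((c + ∑ i, v i : ℝ) : ℂ) := by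
      simp [dotProduct]
    rw [hreal]
    exact Complex.zero_le_real.mpr (add_nonneg hc (sum_nonneg fun i _ => hv i))
  · have hgram : M.map Complex.ofReal
        = (V * diagonal (c • (p ᵥ* V)⁻¹) * Vᵀ).map Complex.ofReal
          * diagonal (fun i => (p i : ℂ)) := by
      rw [← diagonal_map Complex.ofReal_zero]
      refine Eq.trans ?_ (Matrix.map_mul (f := Complex.ofRealHom))
      simp only [M, reverseChannel, diagonal_smul, Matrix.mul_smul, Matrix.smul_mul,
        Matrix.mul_assoc]
      rfl
    have hD : (diagonal (fun i => (p i : ℂ))).PosDef :=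
      PosDef.diagonal fun i => Complex.zero_lt_real.mpr (hp i)
    rw [hgram] at hμM
    exact (posSemidef_map_ofReal_mul_diagonal_mul_transpose V
      fun j => mul_nonneg hc (inv_nonneg.mpr (hpV j).le)).nonneg_of_hasEigenvalue_mul_posDef hD hμM

end Matrix

/-- Every complex eigenvalue of `A = F Uᵀ D_{p*}`, where `F = W D_s⁻¹ Wᵀ`,
`U = (I_m − 1ₘ r)/(1−r₊)` and `p* = (1−r₊)p̂ + r`, is real and lies in `[0,1]`. -/
theorem A_eigenvalues_in_unit_interval {m n : ℕ}
    (W : Matrix (Fin m) (Fin n) ℝ)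
    (hW0 : ∀ i j, 0 ≤ W i j) (hW1 : ∀ i, ∑ j, W i j = 1)
    (r : Fin m → ℝ) (hr0 : ∀ i, 0 ≤ r i) (hr1 : ∑ i, r i < 1)
    (hrW : ∀ i j, (∑ k, r k * W k j) ≤ W i j)
    (phat : Fin m → ℝ) (hph : ∀ i, 0 < phat i) (hph1 : ∑ i, phat i = 1)
    (s : Fin n → ℝ) (hs : ∀ j, s j = ∑ i, phat i * W i j)
    (hspos : ∀ j, 0 < s j)
    (U : Matrix (Fin m) (Fin m) ℝ)
    (hU : U = (1 - ∑ i, r i)⁻¹ • (1 - Matrix.of fun (_ : Fin m) k => r k))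
    (pstar : Fin m → ℝ) (hpstar : ∀ i, pstar i = (1 - ∑ i', r i') * phat i + r i)
    (F : Matrix (Fin m) (Fin m) ℝ)
    (hF : F = W * Matrix.diagonal (fun j => (s j)⁻¹) * Wᵀ)
    (A : Matrix (Fin m) (Fin m) ℝ)
    (hA : A = F * Uᵀ * Matrix.diagonal pstar) :
    ∀ d : ℂ, d ∈ spectrum ℂ (A.map (fun t : ℝ => (t : ℂ))) →
      d.im = 0 ∧ 0 ≤ d.re ∧ d.re ≤ 1 := by
  intro d hd
  obtain rfl : U = unmix r := hU
  have hc : 0 < 1 - ∑ i, r i := sub_pos.mpr hr1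
  have hW1' : W *ᵥ 1 = 1 := funext fun i => by simp [mulVec, dotProduct, hW1 i]
  set V := unmix r * W with hV
  have hpV : pstar ᵥ* V = s := by
    rw [← vecMul_vecMul, show pstar = (1 - ∑ i, r i) • phat + r from funext fun i => by
      simp [hpstar], vecMul_unmix hr1.ne hph1]
    exact funext fun j => (hs j).symm
  have hpstar0 (i) : 0 < pstar i := hpstar i ▸ add_pos_of_pos_of_nonneg (mul_pos hc (hph i)) (hr0 i)
  set R := reverseChannel V pstar with hR
  have hAR : A = W * R := by
    rw [hA, hF, hR, reverseChannel, hpV, hV, transpose_mul]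
    simp only [Matrix.mul_assoc]
    rfl
  have hstoch : A ∈ rowStochastic ℝ (Fin m) := hAR ▸ mul_reverseChannel_mem_rowStochastic hW0
    hW1' (unmix_mul_nonneg hr1 hrW) (fun i => (hpstar0 i).le) (fun j => hpV ▸ (hspos j).ne')
  have hd' : HasEigenvalue (toLin' (A.map Complex.ofReal)) d :=
    hasEigenvalue_iff_mem_spectrum.mpr (by rwa [spectrum_toLin'])
  have hd0 : 0 ≤ d := by
    rw [hAR, mul_eq_smul_unmix_mul_add_replicateRow hr1.ne, ← hAR] at hd'
    exact nonneg_of_hasEigenvalue_smul_mul_reverseChannel_add_replicateRow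
      (by rw [← mulVec_mulVec, hW1', unmix_mulVec_one hr1.ne]) hpstar0 (fun j => hpV ▸ hspos j)
      hc.le (nonneg_vecMul_of_mem_rowStochastic hstoch hr0) hd'
  obtain ⟨hre, him⟩ := Complex.nonneg_iff.mp hd0
  exact ⟨him.symm, hre, (Complex.re_le_norm d).trans (norm_le_one_of_mem_rowStochastic hstoch hd')⟩
end

section
/- (Waterfilling normalization.) Let x ∈ ℝ^m have all entries positive, and let r ∈ ℝ^m have nonnegative entries with Σ_i r_i < 1. Then there exists a unique δ > 0 such that Σ_{i=1}^m max{r_i, δ·x_i} = 1. -/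
open Finset

/-!
The total `δ ↦ ∑ i, max (r i) (δ * x i)` is continuous, equals `∑ i, r i < 1` at `δ = 0` and is at
least `δ * ∑ i, x i` everywhere, so it takes the value `1` at some `δ > 0`. Once the total exceeds
`∑ i, r i`, some term is on its linear branch, which makes the total strictly increasing from there
on; hence the value `1` is taken only once.
-/

namespace Waterfilling

variable {ι : Type*} [Fintype ι] (r x : ι → ℝ)

def fill (δ : ℝ) : ℝ := ∑ i, max (r i) (δ * x i)

theorem continuous_fill : Continuous (fill r x) := by
  unfold fill
  fun_prop

theorem fill_zero {r : ι → ℝ} (hr : ∀ i, 0 ≤ r i) : fill r x 0 = ∑ i, r i :=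
  sum_congr rfl fun i _ => by simp [hr i]

theorem mul_sum_le_fill (δ : ℝ) : δ * ∑ i, x i ≤ fill r x δ := by
  rw [mul_sum]
  exact sum_le_sum fun i _ => le_max_right _ _

variable {r x}

theorem strictMonoOn_fill (hx : ∀ i, 0 < x i) :
    StrictMonoOn (fill r x) {δ | ∑ i, r i < fill r x δ} := by
  intro a ha b _ hab
  obtain ⟨i, hi⟩ : ∃ i, r i < a * x i := by
    by_contra! h
    exact ha.ne' (sum_congr rfl fun i _ => max_eq_left (h i))
  refine sum_lt_sum (fun j _ => max_le_max le_rfl ?_) ⟨i, mem_univ i, ?_⟩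
  · exact mul_le_mul_of_nonneg_right hab.le (hx j).le
  · calc max (r i) (a * x i) = a * x i := max_eq_right hi.le
      _ < b * x i := mul_lt_mul_of_pos_right hab (hx i)
      _ ≤ max (r i) (b * x i) := le_max_right _ _

theorem exists_pos_fill_eq [Nonempty ι] (hx : ∀ i, 0 < x i) (hr : ∀ i, 0 ≤ r i) {c : ℝ}
    (hc : ∑ i, r i < c) : ∃ δ, 0 < δ ∧ fill r x δ = c := by
  have hS : 0 < ∑ i, x i := sum_pos (fun i _ => hx i) univ_nonempty
  have hc0 : 0 < c := (sum_nonneg fun i _ => hr i).trans_lt hc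
  have hb : c ≤ fill r x (c / ∑ i, x i) := by
    simpa [div_mul_cancel₀ c hS.ne'] using mul_sum_le_fill r x (c / ∑ i, x i)
  obtain ⟨δ, ⟨hδ0, -⟩, hδ⟩ := intermediate_value_Icc (div_nonneg hc0.le hS.le)
    (continuous_fill r x).continuousOn ⟨(fill_zero x hr).trans_lt hc |>.le, hb⟩
  refine ⟨δ, hδ0.lt_of_ne ?_, hδ⟩
  rintro rfl
  exact hc.ne ((fill_zero x hr).symm.trans hδ)

end Waterfilling

/-- Waterfilling normalization: if `x > 0` entrywise and `∑ r_i < 1` with `r ≥ 0`,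
there is a unique `δ > 0` with `∑_i max{r_i, δ x_i} = 1`. -/
theorem waterfilling_exists_unique {m : ℕ} (hm : 0 < m)
    (x : Fin m → ℝ) (hx : ∀ i, 0 < x i)
    (r : Fin m → ℝ) (hr0 : ∀ i, 0 ≤ r i) (hr1 : ∑ i, r i < 1) :
    ∃! δ : ℝ, 0 < δ ∧ ∑ i, max (r i) (δ * x i) = 1 := by
  have : Nonempty (Fin m) := ⟨⟨0, hm⟩⟩
  obtain ⟨δ, hδ, hfill⟩ := Waterfilling.exists_pos_fill_eq hx hr0 hr1
  refine ⟨δ, ⟨hδ, hfill⟩, fun η ⟨_, hη⟩ => ?_⟩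
  have above : ∀ {ε}, Waterfilling.fill r x ε = 1 →
      ε ∈ {ε | ∑ i, r i < Waterfilling.fill r x ε} := fun h => by
    simpa only [Set.mem_ofPred_eq, h] using hr1
  exact (Waterfilling.strictMonoOn_fill hx).injOn (above hη) (above hfill) (hη.trans hfill.symm)
end

section
/- Let W be an m×n row-stochastic matrix and r a nonnegative 1×m row vector satisfying W_{ij} ≥ (rW)_j for all i, j (i.e., W ≥ 1_m·rW entrywise). Then r_+ := Σ_i r_i ≤ Σ_{j=1}^n min_{1≤i≤m} W_{ij}. Moreover, if not all rows of W are equal, then Σ_{j=1}^n min_{1≤i≤m} W_{ij} < 1, and hence r_+ < 1. -/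
open Finset Matrix

variable {ι κ : Type*} [Fintype ι] [Fintype κ]

theorem sum_vecMul_eq_sum_of_sum_row_eq_one {R : Type*} [CommSemiring R] {W : Matrix ι κ R}
    (hW : ∀ i, ∑ j, W i j = 1) (r : ι → R) : ∑ j, (r ᵥ* W) j = ∑ i, r i := by
  have hW1 : W *ᵥ 1 = 1 := funext fun i => by simp [mulVec, dotProduct, hW]
  rw [← dotProduct_one, ← dotProduct_one, ← dotProduct_mulVec, hW1]

theorem sum_le_sum_ciInf_of_vecMul_le [Nonempty ι] {W : Matrix ι κ ℝ}
    (hW : ∀ i, ∑ j, W i j = 1) {r : ι → ℝ} (hrW : ∀ i j, (r ᵥ* W) j ≤ W i j) :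
    ∑ i, r i ≤ ∑ j, ⨅ i, W i j := by
  rw [← sum_vecMul_eq_sum_of_sum_row_eq_one hW r]
  exact sum_le_sum fun j _ => le_ciInf fun i => hrW i j

theorem sum_ciInf_lt_sum_row {W : Matrix ι κ ℝ} {i k : ι} {j : κ} (h : W i j < W k j) :
    ∑ j, ⨅ i, W i j < ∑ j, W k j := by
  have hle : ∀ i j, ⨅ i, W i j ≤ W i j := fun i j =>
    ciInf_le (Set.finite_range _).bddBelow i
  exact sum_lt_sum (fun j _ => hle k j) ⟨j, mem_univ j, (hle i j).trans_lt h⟩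

theorem sum_ciInf_lt_one_of_ne {W : Matrix ι κ ℝ} (hW : ∀ i, ∑ j, W i j = 1) {i k : ι} {j : κ}
    (hne : W i j ≠ W k j) : ∑ j, ⨅ i, W i j < 1 := by
  rcases hne.lt_or_gt with h | h
  · simpa [hW k] using sum_ciInf_lt_sum_row h
  · simpa [hW i] using sum_ciInf_lt_sum_row h

theorem rplus_le_sum_min_general {m n : ℕ} (hm : 0 < m)
    (W : Matrix (Fin m) (Fin n) ℝ)
    (hW1 : ∀ i, ∑ j, W i j = 1)
    (r : Fin m → ℝ)
    (hrW : ∀ i j, (∑ k, r k * W k j) ≤ W i j) :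
    (∑ i, r i) ≤ (∑ j, ⨅ i, W i j) ∧
    ((∃ i k : Fin m, ∃ j : Fin n, W i j ≠ W k j) →
      (∑ j, ⨅ i, W i j) < 1 ∧ (∑ i, r i) < 1) := by
  have : Nonempty (Fin m) := ⟨⟨0, hm⟩⟩
  have hle : ∑ i, r i ≤ ∑ j, ⨅ i, W i j := sum_le_sum_ciInf_of_vecMul_le hW1 hrW
  refine ⟨hle, fun ⟨i, k, j, hne⟩ => ?_⟩
  have hlt := sum_ciInf_lt_one_of_ne hW1 hne
  exact ⟨hlt, hle.trans_lt hlt⟩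

/-- If `W ≥ 1ₘ·rW` entrywise, then `r₊ ≤ ∑_j min_i W_{ij}`; moreover, if not all
rows of `W` are equal then `∑_j min_i W_{ij} < 1`, and hence `r₊ < 1`. -/
theorem rplus_le_sum_min {m n : ℕ} (hm : 0 < m)
    (W : Matrix (Fin m) (Fin n) ℝ)
    (hW0 : ∀ i j, 0 ≤ W i j) (hW1 : ∀ i, ∑ j, W i j = 1)
    (r : Fin m → ℝ) (hr0 : ∀ i, 0 ≤ r i)
    (hrW : ∀ i j, (∑ k, r k * W k j) ≤ W i j) :
    (∑ i, r i) ≤ (∑ j, ⨅ i, W i j) ∧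
    ((∃ i k : Fin m, ∃ j : Fin n, W i j ≠ W k j) →
      (∑ j, ⨅ i, W i j) < 1 ∧ (∑ i, r i) < 1) :=
  rplus_le_sum_min_general hm W hW1 r hrW
end

section
/- Let W be an m×n row-stochastic matrix with Σ_{j=1}^n min_{1≤i≤m} W_{ij} < 1, and let r be a nonnegative 1×m row vector with r_+ := Σ_i r_i < 1 satisfying W ≥ 1_m·rW entrywise; set W* := (I_m − 1_m r)·W/(1−r_+). Let f be a nonnegative 1×n vector with f_+ := Σ_j f_j satisfying f_j ≤ (1+f_+)·min_{1≤i≤m} W*_{ij} for every j. Then (1+f_+)/(1−r_+) ≤ 1/(1 − Σ_{j=1}^n min_{1≤i≤m} W_{ij}). -/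
open Finset Matrix

/-!
Write `ρ = r₊`, `S = ∑ⱼ minᵢ Wᵢⱼ` and `F = f₊`. Each column of `W* (1 - ρ)` is the column of `W`
shifted by the constant `(rW)ⱼ`, so its minimum is `minᵢ Wᵢⱼ - (rW)ⱼ`; since `W` is row-stochastic,
`∑ⱼ (rW)ⱼ = ρ`, whence `(1 - ρ) ∑ⱼ minᵢ W*ᵢⱼ ≤ S - ρ`. Summing the constraint on `f` gives
`F ≤ (1 + F) ∑ⱼ minᵢ W*ᵢⱼ`, and combining the two yields `(1 + F)(1 - S) ≤ 1 - ρ`.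
-/

theorem ciInf_comp_le_comp_ciInf {ι α β : Type*} [Finite ι] [Nonempty ι]
    [ConditionallyCompleteLinearOrder α] [ConditionallyCompleteLattice β]
    (g : ι → α) (φ : α → β) : ⨅ i, φ (g i) ≤ φ (⨅ i, g i) := by
  obtain ⟨i₀, hi₀⟩ := exists_eq_ciInf_of_finite (f := g)
  exact hi₀ ▸ ciInf_le (Finite.bddBelow_range _) i₀

namespace Matrix

variable {m n R : Type*} [Fintype m]

theorem one_sub_replicateRow_mul_apply [Ring R] [DecidableEq m] (r : m → R) (W : Matrix m n R)
    (i : m) (j : n) : ((1 - replicateRow m r : Matrix m m R) * W) i j = W i j - (r ᵥ* W) j := by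
  rw [Matrix.sub_mul, Matrix.one_mul, sub_apply]
  rfl

theorem sum_vecMul_of_sum_row_eq_one [Fintype n] [NonAssocSemiring R] (W : Matrix m n R)
    (hW : ∀ i, ∑ j, W i j = 1) (r : m → R) : ∑ j, (r ᵥ* W) j = ∑ i, r i := by
  simp only [vecMul, dotProduct]
  rw [sum_comm]
  simp only [← mul_sum, hW, mul_one]

end Matrix

theorem lambda_upper_bound_general {m n : ℕ} (hm : 0 < m)
    (W : Matrix (Fin m) (Fin n) ℝ)
    (hW1 : ∀ i, ∑ j, W i j = 1)
    (hmin : (∑ j, ⨅ i, W i j) < 1)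
    (r : Fin m → ℝ) (hr1 : ∑ i, r i < 1)
    (Wstar : Matrix (Fin m) (Fin n) ℝ)
    (hWstar : Wstar = (1 - ∑ i, r i)⁻¹ •
      ((1 - Matrix.of fun (_ : Fin m) k => r k) * W))
    (f : Fin n → ℝ) (hf0 : ∀ j, 0 ≤ f j)
    (hfW : ∀ j, f j ≤ (1 + ∑ j', f j') * ⨅ i, Wstar i j) :
    (1 + ∑ j, f j) / (1 - ∑ i, r i) ≤ (1 - ∑ j, ⨅ i, W i j)⁻¹ := by
  have : Nonempty (Fin m) := ⟨⟨0, hm⟩⟩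
  set ρ := ∑ i, r i
  set S := ∑ j, ⨅ i, W i j
  set F := ∑ j, f j
  set T := ∑ j, ⨅ i, Wstar i j
  have hρ : 0 < 1 - ρ := sub_pos.2 hr1
  have hcol : ∀ j, ⨅ i, Wstar i j ≤ (1 - ρ)⁻¹ * ((⨅ i, W i j) - (r ᵥ* W) j) := fun j => by
    have hWstar_apply : ∀ i, Wstar i j = (1 - ρ)⁻¹ * (W i j - (r ᵥ* W) j) := fun i => by
      rw [hWstar, Matrix.smul_apply, smul_eq_mul]
      exact congrArg _ (one_sub_replicateRow_mul_apply r W i j)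
    simpa only [hWstar_apply] using
      ciInf_comp_le_comp_ciInf (W · j) fun x => (1 - ρ)⁻¹ * (x - (r ᵥ* W) j)
  have hT : (1 - ρ) * T ≤ S - ρ := calc
    (1 - ρ) * T ≤ (1 - ρ) * ∑ j, (1 - ρ)⁻¹ * ((⨅ i, W i j) - (r ᵥ* W) j) :=
      mul_le_mul_of_nonneg_left (sum_le_sum fun j _ => hcol j) hρ.le
    _ = S - ρ := by
      rw [← mul_sum, mul_inv_cancel_left₀ hρ.ne', sum_sub_distrib, sum_vecMul_of_sum_row_eq_one W hW1]
  have hF : F ≤ (1 + F) * T := by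
    rw [mul_sum]
    exact sum_le_sum fun j _ => hfW j
  have hF0 : 0 ≤ 1 + F := add_nonneg zero_le_one (sum_nonneg fun j _ => hf0 j)
  rw [inv_eq_one_div, div_le_div_iff₀ hρ (sub_pos.2 hmin)]
  nlinarith [mul_le_mul_of_nonneg_left hT hF0]

/-- Under the constraints (4) and (16) on the squeezing parameters `r` and `f`,
the multiplier `λ = (1+f₊)/(1−r₊)` satisfies the upper bound
`λ ≤ 1/(1 − ∑_j min_i W_{ij})`. -/
theorem lambda_upper_bound {m n : ℕ} (hm : 0 < m)
    (W : Matrix (Fin m) (Fin n) ℝ)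
    (hW0 : ∀ i j, 0 ≤ W i j) (hW1 : ∀ i, ∑ j, W i j = 1)
    (hmin : (∑ j, ⨅ i, W i j) < 1)
    (r : Fin m → ℝ) (hr0 : ∀ i, 0 ≤ r i) (hr1 : ∑ i, r i < 1)
    (hrW : ∀ i j, (∑ k, r k * W k j) ≤ W i j)
    (Wstar : Matrix (Fin m) (Fin n) ℝ)
    (hWstar : Wstar = (1 - ∑ i, r i)⁻¹ •
      ((1 - Matrix.of fun (_ : Fin m) k => r k) * W))
    (f : Fin n → ℝ) (hf0 : ∀ j, 0 ≤ f j)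
    (hfW : ∀ j, f j ≤ (1 + ∑ j', f j') * ⨅ i, Wstar i j) :
    (1 + ∑ j, f j) / (1 - ∑ i, r i) ≤ (1 - ∑ j, ⨅ i, W i j)⁻¹ :=
  lambda_upper_bound_general hm W hW1 hmin r hr1 Wstar hWstar f hf0 hfW
end
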